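/- arXiv:2108.12025 — 9 statements merged into one kernel-verified Lean document; each statement's English description precedes it below -/
import Mathlib

section
/- Let u_P, u_I : ℝ≥0 → ℝ be twice continuously differentiable, strictly decreasing functions with u_P''(x)/u_P'(x) > u_I''(x)/u_I'(x) for all x ≥ 0. Then for any α ∈ (0,1), the function g(x) = α·u_P(x) − (1−α)·u_I(x) is strictly quasi-concave on ℝ≥0: for all x' < x'' and λ ∈ (0,1), g(λx' + (1−λ)x'') > min(g(x'), g(x'')). -/
/-! Write `g' = u_I' · (α r - (1 - α))` with `r = u_P' / u_I' > 0`. The curvature condition says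
exactly that `r` is strictly increasing, so `g'` changes sign at most once, from positive to
negative: `g` increases and then decreases, which makes it strictly quasi-concave. -/

open Set

theorem min_lt_of_deriv_single_crossing {f : ℝ → ℝ} {a b z : ℝ}
    (hf : ContinuousOn f (Icc a b))
    (hcross : ∀ s ∈ Ioo a b, ∀ t ∈ Ioo a b, s < t → deriv f s ≤ 0 → deriv f t < 0)
    (haz : a < z) (hzb : z < b) : min (f a) (f b) < f z := by
  by_cases hpos : ∀ s ∈ Ioo a z, 0 < deriv f s
  · have hmono : StrictMonoOn f (Icc a z) :=
      strictMonoOn_of_deriv_pos (convex_Icc a z) (hf.mono (Icc_subset_Icc_right hzb.le))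
        (by rwa [interior_Icc])
    exact (min_le_left _ _).trans_lt
      (hmono (left_mem_Icc.2 haz.le) (right_mem_Icc.2 haz.le) haz)
  · push Not at hpos
    obtain ⟨s, hs, hs0⟩ := hpos
    have hanti : StrictAntiOn f (Icc z b) := by
      refine strictAntiOn_of_deriv_neg (convex_Icc z b) (hf.mono (Icc_subset_Icc_left haz.le)) ?_
      rw [interior_Icc]
      exact fun t ht => hcross s ⟨hs.1, hs.2.trans hzb⟩ t ⟨haz.trans ht.1, ht.2⟩
        (hs.2.trans ht.1) hs0
    exact (min_le_right _ _).trans_lt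
      (hanti (left_mem_Icc.2 hzb.le) (right_mem_Icc.2 hzb.le) hzb)

section RiskAversion

variable {uP uI : ℝ → ℝ} {s : Set ℝ}

theorem strictMonoOn_deriv_div_deriv (hs : Convex ℝ s)
    (hP2 : ContDiff ℝ 2 uP) (hI2 : ContDiff ℝ 2 uI)
    (hPder : ∀ x ∈ s, deriv uP x < 0) (hIder : ∀ x ∈ s, deriv uI x < 0)
    (hcurv : ∀ x ∈ interior s,
      deriv (deriv uI) x / deriv uI x < deriv (deriv uP) x / deriv uP x) :
    StrictMonoOn (fun x => deriv uP x / deriv uI x) s := by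
  refine strictMonoOn_of_deriv_pos hs ?_ fun x hx => ?_
  · exact (hP2.continuous_deriv one_le_two).continuousOn.div
      (hI2.continuous_deriv one_le_two).continuousOn fun x hx => (hIder x hx).ne
  · have hxs := interior_subset hx
    have hp := hPder x hxs
    have hq := hIder x hxs
    rw [(((hP2.differentiable_deriv_two x).hasDerivAt).fun_div
      (hI2.differentiable_deriv_two x).hasDerivAt hq.ne).deriv]
    have hcross : deriv (deriv uI) x * deriv uP x < deriv (deriv uP) x * deriv uI x := by
      have := hcurv x hx
      rw [← neg_div_neg_eq, ← neg_div_neg_eq (deriv (deriv uP) x),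
        div_lt_div_iff₀ (neg_pos.2 hq) (neg_pos.2 hp)] at this
      linarith
    exact div_pos (by linarith) (pow_pos (neg_pos.2 hq) 2 |>.trans_eq (neg_sq _))

theorem deriv_weighted_sub (hP : Differentiable ℝ uP) (hI : Differentiable ℝ uI) (α x : ℝ) :
    deriv (fun y => α * uP y - (1 - α) * uI y) x = α * deriv uP x - (1 - α) * deriv uI x :=
  (((hP x).hasDerivAt.const_mul α).sub ((hI x).hasDerivAt.const_mul (1 - α))).deriv

theorem deriv_weighted_sub_neg_of_nonpos (hs : Convex ℝ s)
    (hP2 : ContDiff ℝ 2 uP) (hI2 : ContDiff ℝ 2 uI)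
    (hPder : ∀ x ∈ s, deriv uP x < 0) (hIder : ∀ x ∈ s, deriv uI x < 0)
    (hcurv : ∀ x ∈ interior s,
      deriv (deriv uI) x / deriv uI x < deriv (deriv uP) x / deriv uP x)
    {α : ℝ} (hα : 0 < α) {a b : ℝ} (ha : a ∈ s) (hb : b ∈ s) (hab : a < b)
    (hga : deriv (fun y => α * uP y - (1 - α) * uI y) a ≤ 0) :
    deriv (fun y => α * uP y - (1 - α) * uI y) b < 0 := by
  have hP := hP2.differentiable two_ne_zero
  have hI := hI2.differentiable two_ne_zero
  rw [deriv_weighted_sub hP hI] at hga ⊢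
  have hr := strictMonoOn_deriv_div_deriv hs hP2 hI2 hPder hIder hcurv ha hb hab
  have hqa := hIder a ha
  have hqb := hIder b hb
  have hra : 1 - α ≤ α * (deriv uP a / deriv uI a) := by
    rw [mul_div_assoc', le_div_iff_of_neg hqa]
    linarith
  have hrb : 1 - α < α * (deriv uP b / deriv uI b) :=
    hra.trans_lt (mul_lt_mul_of_pos_left hr hα)
  rw [mul_div_assoc', lt_div_iff_of_neg hqb] at hrb
  linarith

end RiskAversion

theorem stmt0_general (uP uI : ℝ → ℝ)
    (hP2 : ContDiff ℝ 2 uP) (hI2 : ContDiff ℝ 2 uI)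
    (hPder : ∀ x : ℝ, 0 ≤ x → deriv uP x < 0)
    (hIder : ∀ x : ℝ, 0 ≤ x → deriv uI x < 0)
    (hcurv : ∀ x : ℝ, 0 ≤ x →
      deriv (deriv uI) x / deriv uI x < deriv (deriv uP) x / deriv uP x)
    (α : ℝ) (hα : α ∈ Ioo (0:ℝ) 1) :
    ∀ x' x'' : ℝ, 0 ≤ x' → x' < x'' → ∀ l ∈ Ioo (0:ℝ) 1,
      min (α * uP x' - (1 - α) * uI x') (α * uP x'' - (1 - α) * uI x'')
        < α * uP (l * x' + (1 - l) * x'') - (1 - α) * uI (l * x' + (1 - l) * x'') := by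
  intro x' x'' hx' hlt l ⟨hl0, hl1⟩
  have hcurv' : ∀ x ∈ interior (Ici (0 : ℝ)),
      deriv (deriv uI) x / deriv uI x < deriv (deriv uP) x / deriv uP x := by
    rw [interior_Ici]
    exact fun x hx => hcurv x (le_of_lt hx)
  have hg : Continuous fun y => α * uP y - (1 - α) * uI y :=
    (continuous_const.mul hP2.continuous).sub (continuous_const.mul hI2.continuous)
  refine min_lt_of_deriv_single_crossing (f := fun y => α * uP y - (1 - α) * uI y)
    hg.continuousOn (fun a ha b hb hab => ?_) (by nlinarith) (by nlinarith)
  exact deriv_weighted_sub_neg_of_nonpos (convex_Ici 0) hP2 hI2 hPder hIder hcurv' hα.1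
    (hx'.trans ha.1.le) (hx'.trans hb.1.le) hab

/-- Lemma 1 of the paper. Under the absolute-risk-aversion ordering,
the weighted utility difference `g = α·u_P − (1−α)·u_I` is strictly quasi-concave on `ℝ≥0`. -/
theorem stmt0 (uP uI : ℝ → ℝ)
    (hP2 : ContDiff ℝ 2 uP) (hI2 : ContDiff ℝ 2 uI)
    (hPanti : StrictAntiOn uP (Ici 0)) (hIanti : StrictAntiOn uI (Ici 0))
    (hPder : ∀ x : ℝ, 0 ≤ x → deriv uP x < 0)
    (hIder : ∀ x : ℝ, 0 ≤ x → deriv uI x < 0)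
    (hcurv : ∀ x : ℝ, 0 ≤ x →
      deriv (deriv uI) x / deriv uI x < deriv (deriv uP) x / deriv uP x)
    (α : ℝ) (hα : α ∈ Ioo (0:ℝ) 1) :
    ∀ x' x'' : ℝ, 0 ≤ x' → x' < x'' → ∀ l ∈ Ioo (0:ℝ) 1,
      min (α * uP x' - (1 - α) * uI x') (α * uP x'' - (1 - α) * uI x'')
        < α * uP (l * x' + (1 - l) * x'') - (1 - α) * uI (l * x' + (1 - l) * x'') :=
  stmt0_general uP uI hP2 hI2 hPder hIder hcurv α hα
end

section
/- Let g : [0, X̄] → ℝ be continuous and strictly quasi-concave, with X̄ > 0. Suppose x_I, x_P ∈ (0, X̄) satisfy g(x_I) ≤ g(X̄) (case 1) or g(x_P) ≤ g(0) (case 2). Then these two cases cannot hold simultaneously when x_P < x_I: if g(x_P) ≤ g(0), then g(x_I) > g(X̄). -/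
open Set

/-! Strict quasi-concavity on a line says that `g` at an interior point beats the smaller of
its values at two outer points. Applied to `0 < x_P < x_I`, the case hypothesis `g x_P ≤ g 0`
forces `g x_I < g x_P`; applied to `x_P < x_I < X̄`, this in turn forces `g X̄ < g x_I`. -/

section StrictQuasiconcave

variable {s : Set ℝ} {f : ℝ → ℝ}

theorem min_lt_of_strictQuasiconcave
    (hf : ∀ a ∈ s, ∀ b ∈ s, a ≠ b → ∀ l ∈ Ioo (0:ℝ) 1,
      min (f a) (f b) < f (l * a + (1 - l) * b))
    {a b c : ℝ} (ha : a ∈ s) (hc : c ∈ s) (hab : a < b) (hbc : b < c) :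
    min (f a) (f c) < f b := by
  have hca : 0 < c - a := by linarith
  have hl : (c - b) / (c - a) ∈ Ioo (0:ℝ) 1 :=
    ⟨div_pos (by linarith) hca, (div_lt_one hca).2 (by linarith)⟩
  have hcomb : (c - b) / (c - a) * a + (1 - (c - b) / (c - a)) * c = b := by
    field_simp
    ring
  simpa only [hcomb] using hf a ha c hc (by linarith) _ hl

theorem lt_of_strictQuasiconcave_of_le
    (hf : ∀ a ∈ s, ∀ b ∈ s, a ≠ b → ∀ l ∈ Ioo (0:ℝ) 1,
      min (f a) (f b) < f (l * a + (1 - l) * b))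
    {a b c : ℝ} (ha : a ∈ s) (hc : c ∈ s) (hab : a < b) (hbc : b < c) (hba : f b ≤ f a) :
    f c < f b := by
  rcases min_lt_iff.mp (min_lt_of_strictQuasiconcave hf ha hc hab hbc) with h | h
  · exact absurd (h.trans_le hba) (lt_irrefl _)
  · exact h

end StrictQuasiconcave

theorem stmt2_general (Xb : ℝ) (g : ℝ → ℝ)
    (hqc : ∀ a ∈ Icc (0:ℝ) Xb, ∀ b ∈ Icc (0:ℝ) Xb, a ≠ b → ∀ l ∈ Ioo (0:ℝ) 1,
      min (g a) (g b) < g (l * a + (1 - l) * b))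
    (xI xP : ℝ) (hxI : xI ∈ Ioo 0 Xb) (hxP : xP ∈ Ioo 0 Xb) (hlt : xP < xI)
    (hcase2 : g xP ≤ g 0) :
    g Xb < g xI := by
  have hI_lt_P : g xI < g xP :=
    lt_of_strictQuasiconcave_of_le hqc (left_mem_Icc.2 (hxP.1.trans hxP.2).le)
      (Ioo_subset_Icc_self hxI) hxP.1 hlt hcase2
  exact lt_of_strictQuasiconcave_of_le hqc (Ioo_subset_Icc_self hxP)
    (right_mem_Icc.2 (hxP.1.trans hxP.2).le) hlt hxI.2 hI_lt_P.le

/-- for a continuous strictly quasi-concave `g` on `[0, X̄]`,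
the cases `g(x_P) ≤ g(0)` (PI) and `g(x_I) ≤ g(X̄)` (IP) are mutually exclusive
when `x_P < x_I` lie in the interior: if `g(x_P) ≤ g(0)` then `g(x_I) > g(X̄)`. -/
theorem stmt2 (Xb : ℝ) (hXb : 0 < Xb) (g : ℝ → ℝ)
    (hg : ContinuousOn g (Icc 0 Xb))
    (hqc : ∀ a ∈ Icc (0:ℝ) Xb, ∀ b ∈ Icc (0:ℝ) Xb, a ≠ b → ∀ l ∈ Ioo (0:ℝ) 1,
      min (g a) (g b) < g (l * a + (1 - l) * b))
    (xI xP : ℝ) (hxI : xI ∈ Ioo 0 Xb) (hxP : xP ∈ Ioo 0 Xb) (hlt : xP < xI)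
    (hcase2 : g xP ≤ g 0) :
    g Xb < g xI :=
  stmt2_general Xb g hqc xI xP hxI hxP hlt hcase2
end

section
/- Let u_P, u_I be strictly decreasing, twice continuously differentiable functions on ℝ≥0 with u_P''(x)/u_P'(x) > u_I''(x)/u_I'(x) for all x. Let x₂ : [0, x̄] → ℝ be a differentiable, strictly increasing function with x₂(x₁) > x₁ for all x₁. Fix x₂(x₁) = F⁻¹(F(x₁) + μ_P) for a strictly increasing continuously differentiable CDF F so that x₂'(x₁) = f(x₁)/f(x₂(x₁)). Then γ(x₁) = (u_P(x₁) − u_P(x₂(x₁))) / (u_I(x₁) − u_I(x₂(x₁))) is strictly increasing in x₁. -/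
/-!
By Cauchy's mean value theorem the chord ratio `γ(x) = (u_P x - u_P y) / (u_I x - u_I y)`,
`y = x₂ x`, equals `u_P' c / u_I' c` for some `c ∈ (x, y)`. The curvature condition says
exactly that `r = u_P' / u_I'` is strictly increasing, so `r x < γ x < r y`. Differentiating,
`γ'` has the sign of `(u_P' x - γ u_I' x) + x₂' x · (γ u_I' y - u_P' y)`, where the first term
is positive because `γ > r x` and the second is nonnegative because `γ < r y` and `x₂' ≥ 0`.
-/

open Set

theorem strictMonoOn_div_of_logDeriv_lt {f g : ℝ → ℝ} {s : Set ℝ} (hs : Convex ℝ s)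
    (hf : Differentiable ℝ f) (hg : Differentiable ℝ g) (hfg : ∀ x ∈ s, 0 < f x * g x)
    (h : ∀ x ∈ interior s, deriv g x / g x < deriv f x / f x) :
    StrictMonoOn (fun x => f x / g x) s := by
  have hg0 : ∀ x ∈ s, g x ≠ 0 := fun x hx => right_ne_zero_of_mul (hfg x hx).ne'
  refine strictMonoOn_of_deriv_pos hs
    (hf.continuous.continuousOn.div hg.continuous.continuousOn hg0) fun x hx => ?_
  have hxs := interior_subset hx
  have hf0 : f x ≠ 0 := left_ne_zero_of_mul (hfg x hxs).ne'
  have hgx := hg0 x hxs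
  rw [((hf x).hasDerivAt.fun_div (hg x).hasDerivAt hgx).deriv]
  have hcross := mul_lt_mul_of_pos_right (h x hx) (hfg x hxs)
  have hlhs : deriv g x / g x * (f x * g x) = f x * deriv g x := by field_simp
  have hrhs : deriv f x / f x * (f x * g x) = deriv f x * g x := by field_simp
  rw [hlhs, hrhs] at hcross
  exact div_pos (sub_pos.mpr hcross) (by positivity)

theorem div_sub_mem_Ioo_of_strictMonoOn {f g : ℝ → ℝ} {a b : ℝ} (hab : a < b)
    (hf : Differentiable ℝ f) (hg : Differentiable ℝ g)
    (hg' : ∀ x ∈ Icc a b, deriv g x ≠ 0)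
    (hr : StrictMonoOn (fun x => deriv f x / deriv g x) (Icc a b)) :
    (f a - f b) / (g a - g b) ∈ Ioo (deriv f a / deriv g a) (deriv f b / deriv g b) := by
  obtain ⟨c, hc, hcauchy⟩ := exists_ratio_deriv_eq_ratio_slope f hab hf.continuous.continuousOn
    hf.differentiableOn g hg.continuous.continuousOn hg.differentiableOn
  obtain ⟨d, hd, hslope⟩ := exists_deriv_eq_slope g hab hg.continuous.continuousOn
    hg.differentiableOn
  have hgab : g a - g b ≠ 0 := fun h0 => hg' d (Ioo_subset_Icc_self hd) <| by
    rw [hslope, show g b - g a = 0 by linarith, zero_div]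
  have hchord : (f a - f b) / (g a - g b) = deriv f c / deriv g c := by
    rw [div_eq_div_iff hgab (hg' c (Ioo_subset_Icc_self hc))]
    linarith
  rw [hchord]
  exact ⟨hr (left_mem_Icc.mpr hab.le) (Ioo_subset_Icc_self hc) hc.1,
    hr (Ioo_subset_Icc_self hc) (right_mem_Icc.mpr hab.le) hc.2⟩

theorem deriv_chord_ratio_pos {f g φ : ℝ → ℝ} {x c : ℝ} (hf : Differentiable ℝ f)
    (hg : Differentiable ℝ g) (hφ : HasDerivAt φ c x) (hc : 0 ≤ c)
    (hgx : deriv g x < 0) (hgy : deriv g (φ x) < 0) (hD : 0 < g x - g (φ x))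
    (hγ : (f x - f (φ x)) / (g x - g (φ x)) ∈
      Ioo (deriv f x / deriv g x) (deriv f (φ x) / deriv g (φ x))) :
    0 < deriv (fun z => (f z - f (φ z)) / (g z - g (φ z))) x := by
  have hN : HasDerivAt (fun z => f z - f (φ z)) (deriv f x - deriv f (φ x) * c) x :=
    (hf x).hasDerivAt.sub ((hf (φ x)).hasDerivAt.comp x hφ)
  have hD' : HasDerivAt (fun z => g z - g (φ z)) (deriv g x - deriv g (φ x) * c) x :=
    (hg x).hasDerivAt.sub ((hg (φ x)).hasDerivAt.comp x hφ)
  rw [(hN.fun_div hD' hD.ne').deriv]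
  set γ := (f x - f (φ x)) / (g x - g (φ x)) with hγ_def
  have hN_eq : f x - f (φ x) = γ * (g x - g (φ x)) := by rw [hγ_def, div_mul_cancel₀ _ hD.ne']
  have hleft : 0 < deriv f x - γ * deriv g x := by
    linarith [(div_lt_iff_of_neg hgx).mp hγ.1]
  have hright : 0 ≤ c * (γ * deriv g (φ x) - deriv f (φ x)) :=
    mul_nonneg hc (by linarith [(lt_div_iff_of_neg hgy).mp hγ.2])
  refine div_pos ?_ (by positivity)
  rw [hN_eq]
  nlinarith [mul_pos hD (add_pos_of_pos_of_nonneg hleft hright)]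

theorem stmt4_general (uP uI : ℝ → ℝ)
    (hP2 : ContDiff ℝ 2 uP) (hI2 : ContDiff ℝ 2 uI)
    (hIanti : StrictAntiOn uI (Ici 0))
    (hPder : ∀ x : ℝ, 0 ≤ x → deriv uP x < 0)
    (hIder : ∀ x : ℝ, 0 ≤ x → deriv uI x < 0)
    (hcurv : ∀ x : ℝ, 0 ≤ x →
      deriv (deriv uI) x / deriv uI x < deriv (deriv uP) x / deriv uP x)
    (xbar : ℝ)
    (x₂ : ℝ → ℝ) (hx₂diff : DifferentiableOn ℝ x₂ (Icc 0 xbar))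
    (hx₂mono : StrictMonoOn x₂ (Icc 0 xbar))
    (hx₂gt : ∀ x ∈ Icc (0:ℝ) xbar, x < x₂ x) :
    StrictMonoOn (fun x => (uP x - uP (x₂ x)) / (uI x - uI (x₂ x))) (Icc 0 xbar) := by
  have hP1 : Differentiable ℝ uP := hP2.differentiable (by norm_num)
  have hI1 : Differentiable ℝ uI := hI2.differentiable (by norm_num)
  have hr : StrictMonoOn (fun x => deriv uP x / deriv uI x) (Ici 0) :=
    strictMonoOn_div_of_logDeriv_lt (convex_Ici 0) hP2.differentiable_deriv_two
      hI2.differentiable_deriv_two (fun x hx => mul_pos_of_neg_of_neg (hPder x hx) (hIder x hx))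
      fun x hx => hcurv x (interior_subset hx)
  have hx₂_nonneg : ∀ x ∈ Icc (0:ℝ) xbar, 0 ≤ x₂ x := fun x hx =>
    hx.1.trans (hx₂gt x hx).le
  have hD : ∀ x ∈ Icc (0:ℝ) xbar, 0 < uI x - uI (x₂ x) := fun x hx =>
    sub_pos.mpr (hIanti hx.1 (hx₂_nonneg x hx) (hx₂gt x hx))
  refine strictMonoOn_of_deriv_pos (convex_Icc 0 xbar) ?_ fun x hx => ?_
  · exact (hP1.continuous.continuousOn.sub (hP1.continuous.comp_continuousOn
      hx₂diff.continuousOn)).div (hI1.continuous.continuousOn.sub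
      (hI1.continuous.comp_continuousOn hx₂diff.continuousOn)) fun x hx => (hD x hx).ne'
  rw [interior_Icc] at hx
  have hxI := Ioo_subset_Icc_self hx
  have hnhds := Icc_mem_nhds hx.1 hx.2
  have hx₂' : 0 ≤ deriv x₂ x := by
    rw [← derivWithin_of_mem_nhds hnhds]
    exact hx₂mono.monotoneOn.derivWithin_nonneg
  exact deriv_chord_ratio_pos hP1 hI1 ((hx₂diff x hxI).differentiableAt hnhds).hasDerivAt hx₂'
    (hIder x hxI.1) (hIder _ (hx₂_nonneg x hxI)) (hD x hxI)
    (div_sub_mem_Ioo_of_strictMonoOn (hx₂gt x hxI) hP1 hI1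
      (fun z hz => (hIder z (hxI.1.trans hz.1)).ne) (hr.mono fun z hz => hxI.1.trans hz.1))

/-- with `x₂(x₁)` determined by `F(x₂(x₁)) = F(x₁) + μ_P` for a strictly
increasing C¹ CDF `F` with positive density, the ratio
`γ(x₁) = (u_P(x₁) − u_P(x₂(x₁))) / (u_I(x₁) − u_I(x₂(x₁)))` is strictly increasing. -/
theorem stmt4 (uP uI : ℝ → ℝ)
    (hP2 : ContDiff ℝ 2 uP) (hI2 : ContDiff ℝ 2 uI)
    (hPanti : StrictAntiOn uP (Ici 0)) (hIanti : StrictAntiOn uI (Ici 0))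
    (hPder : ∀ x : ℝ, 0 ≤ x → deriv uP x < 0)
    (hIder : ∀ x : ℝ, 0 ≤ x → deriv uI x < 0)
    (hcurv : ∀ x : ℝ, 0 ≤ x →
      deriv (deriv uI) x / deriv uI x < deriv (deriv uP) x / deriv uP x)
    (xbar : ℝ) (hxbar : 0 ≤ xbar)
    (F : ℝ → ℝ) (hF1 : ContDiff ℝ 1 F) (hFder : ∀ x : ℝ, 0 ≤ x → 0 < deriv F x)
    (μP : ℝ) (hμP : 0 < μP)
    (x₂ : ℝ → ℝ) (hx₂diff : DifferentiableOn ℝ x₂ (Icc 0 xbar))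
    (hx₂mono : StrictMonoOn x₂ (Icc 0 xbar))
    (hx₂gt : ∀ x ∈ Icc (0:ℝ) xbar, x < x₂ x)
    (hfeas : ∀ x ∈ Icc (0:ℝ) xbar, F (x₂ x) = F x + μP) :
    StrictMonoOn (fun x => (uP x - uP (x₂ x)) / (uI x - uI (x₂ x))) (Icc 0 xbar) :=
  stmt4_general uP uI hP2 hI2 hIanti hPder hIder hcurv xbar x₂ hx₂diff hx₂mono hx₂gt
end

section
/- Let u_1, ..., u_N : [0,X] → ℝ be strictly decreasing continuous functions such that each pair (u_i, u_j) with i < j satisfies: the difference α u_i − β u_j is strictly quasi-concave for all α, β > 0. Fix constants α_1,...,α_N > 0 and b_1,...,b_N ∈ ℝ, and define v(x) = max_{j} (α_j u_j(x) + b_j). Then for each k, the set {x ∈ [0,X] : α_k u_k(x) + b_k = v(x)} is a union of at most k closed intervals whose complement within conv of the set consists of the 'argmax regions' of more risk-averse types, and η_k(x) = α_k u_k(x) + b_k − max_{j>k}(α_j u_j(x) + b_j) is strictly quasi-concave. -/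
/-!
Write `f j = α j • u j + b j`. For `i < j` the difference `f i - f j` is strictly quasi-concave,
so its superlevel sets are intervals. Consequently `η_k`, the pointwise minimum of the functions
`f k - f j` (`j > k`), is strictly quasi-concave, and the set where `f k ≥ f j` for all `j > k`
is an interval containing the argmax region `A_k` of `k`: every point of `conv A_k \ A_k` is won
by some more risk-averse type `j < k`. The sets `{f k < f j}`, `j < k`, are intervals disjoint
from `A_k` that cover these gaps; each one meets at most one gap of the compact set `A_k`, so
`A_k` has at most `k` gaps and is a union of at most `k + 1` closed intervals (`k` counted from 0).
-/

open Set

def StrictQuasiconcaveOn (s : Set ℝ) (f : ℝ → ℝ) : Prop :=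
  ∀ x ∈ s, ∀ y ∈ s, x ≠ y → ∀ l ∈ Ioo (0:ℝ) 1, min (f x) (f y) < f (l * x + (1 - l) * y)

namespace StrictQuasiconcaveOn

variable {s : Set ℝ} {f : ℝ → ℝ}

theorem add_const (hf : StrictQuasiconcaveOn s f) (c : ℝ) :
    StrictQuasiconcaveOn s (fun x => f x + c) := fun x hx y hy hxy l hl => by
  simpa only [min_add_add_right, add_lt_add_iff_right] using hf x hx y hy hxy l hl

theorem quasiconcaveOn (hs : Convex ℝ s) (hf : StrictQuasiconcaveOn s f) :
    QuasiconcaveOn ℝ s f := by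
  refine quasiconcaveOn_iff_min_le.2 ⟨hs, fun x hx y hy a b ha hb hab => ?_⟩
  obtain rfl | ha := ha.eq_or_lt
  · rw [zero_add] at hab
    simp [hab]
  obtain rfl | hb := hb.eq_or_lt
  · rw [add_zero] at hab
    simp [hab]
  obtain rfl | hxy := eq_or_ne x y
  · rw [← add_smul, hab, one_smul, min_self]
  obtain rfl : b = 1 - a := by linarith
  exact (hf x hx y hy hxy a ⟨ha, by linarith⟩).le

theorem of_forall_le_of_exists_eq {ι : Type*} {P : ι → Prop} {g : ι → ℝ → ℝ}
    (hs : Convex ℝ s) (hg : ∀ i, P i → StrictQuasiconcaveOn s (g i))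
    (hle : ∀ x ∈ s, ∀ i, P i → f x ≤ g i x) (heq : ∀ x ∈ s, ∃ i, P i ∧ f x = g i x) :
    StrictQuasiconcaveOn s f := by
  intro x hx y hy hxy l hl
  have hz : l * x + (1 - l) * y ∈ s := hs hx hy hl.1.le (by linarith [hl.2]) (by ring)
  obtain ⟨i, hi, hfz⟩ := heq _ hz
  calc min (f x) (f y) ≤ min (g i x) (g i y) := min_le_min (hle x hx i hi) (hle y hy i hi)
    _ < g i (l * x + (1 - l) * y) := hg i hi x hx y hy hxy l hl
    _ = f (l * x + (1 - l) * y) := hfz.symm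

end StrictQuasiconcaveOn

-- Empty intervals `Icc a c` with `c < a` are allowed, so this says "at most `n` intervals".
def IsFinUnionIcc (n : ℕ) (S : Set ℝ) : Prop :=
  ∃ a c : Fin n → ℝ, S = ⋃ i, Icc (a i) (c i)

theorem isFinUnionIcc_empty (n : ℕ) : IsFinUnionIcc n ∅ :=
  ⟨fun _ => 1, fun _ => 0, by simp⟩

theorem isFinUnionIcc_Icc (a c : ℝ) : IsFinUnionIcc 1 (Icc a c) :=
  ⟨fun _ => a, fun _ => c, (iUnion_const _).symm⟩

theorem IsFinUnionIcc.union {m n : ℕ} {S T : Set ℝ} (hS : IsFinUnionIcc m S)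
    (hT : IsFinUnionIcc n T) : IsFinUnionIcc (m + n) (S ∪ T) := by
  obtain ⟨a, c, rfl⟩ := hS
  obtain ⟨a', c', rfl⟩ := hT
  refine ⟨Fin.append a a', Fin.append c c', ?_⟩
  ext x
  simp only [mem_union, mem_iUnion]
  constructor
  · rintro (⟨i, hi⟩ | ⟨i, hi⟩)
    · exact ⟨Fin.castAdd n i, by simpa using hi⟩
    · exact ⟨Fin.natAdd m i, by simpa using hi⟩
  · rintro ⟨i, hi⟩
    induction i using Fin.addCases with
    | left i => exact Or.inl ⟨i, by simpa using hi⟩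
    | right i => exact Or.inr ⟨i, by simpa using hi⟩

theorem IsFinUnionIcc.mono {m n : ℕ} {S : Set ℝ} (hS : IsFinUnionIcc m S) (hmn : m ≤ n) :
    IsFinUnionIcc n S := by
  obtain ⟨d, rfl⟩ := Nat.exists_eq_add_of_le hmn
  simpa using hS.union (isFinUnionIcc_empty d)

namespace IsCompact

variable {S V : Set ℝ} {g z : ℝ}

theorem isFinUnionIcc_one_of_convex (hS : IsCompact S) (hc : Convex ℝ S) : IsFinUnionIcc 1 S := by
  rcases S.eq_empty_or_nonempty with rfl | hne
  · exact isFinUnionIcc_empty 1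
  · rw [eq_Icc_of_connected_compact ⟨hne, hc.isPreconnected⟩ hS]
    exact isFinUnionIcc_Icc _ _

theorem disjoint_convexHull_inter_Iic (hS : IsCompact S) (hV : Convex ℝ V)
    (hVS : Disjoint V S) (hzV : z ∈ V) (hgz : g ≤ z) :
    Disjoint V (convexHull ℝ (S ∩ Iic g)) := by
  refine disjoint_left.2 fun y hyV hyL => ?_
  have hL : IsCompact (S ∩ Iic g) := hS.inter_right isClosed_Iic
  have hp := hL.sSup_mem (convexHull_nonempty_iff.1 ⟨y, hyL⟩)
  have hyp : y ≤ sSup (S ∩ Iic g) :=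
    convexHull_min (fun w hw => le_csSup hL.bddAbove hw) (convex_Iic _) hyL
  have hpz : sSup (S ∩ Iic g) ≤ z := hp.2.trans hgz
  exact disjoint_left.1 hVS (hV.ordConnected.out hyV hzV ⟨hyp, hpz⟩) hp.1

theorem disjoint_convexHull_inter_Ici (hS : IsCompact S) (hV : Convex ℝ V)
    (hVS : Disjoint V S) (hzV : z ∈ V) (hzg : z ≤ g) :
    Disjoint V (convexHull ℝ (S ∩ Ici g)) := by
  refine disjoint_left.2 fun y hyV hyR => ?_
  have hR : IsCompact (S ∩ Ici g) := hS.inter_right isClosed_Ici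
  have hq := hR.sInf_mem (convexHull_nonempty_iff.1 ⟨y, hyR⟩)
  have hqy : sInf (S ∩ Ici g) ≤ y :=
    convexHull_min (fun w hw => csInf_le hR.bddBelow hw) (convex_Ici _) hyR
  have hzq : z ≤ sInf (S ∩ Ici g) := hzg.trans hq.2
  exact disjoint_left.1 hVS (hV.ordConnected.out hzV hyV ⟨hzq, hqy⟩) hq.1

end IsCompact

theorem convexHull_inter_diff_subset {𝕜 E : Type*} [Semiring 𝕜] [PartialOrder 𝕜]
    [AddCommMonoid E] [Module 𝕜 E] {S C : Set E} (hC : Convex 𝕜 C) :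
    convexHull 𝕜 (S ∩ C) \ (S ∩ C) ⊆ convexHull 𝕜 S \ S :=
  fun _ ⟨hx, hx'⟩ => ⟨convexHull_mono inter_subset_left hx,
    fun hxS => hx' ⟨hxS, convexHull_min inter_subset_right hC hx⟩⟩

theorem IsCompact.isFinUnionIcc_of_convexHull_diff_subset {ι : Type*} {V : ι → Set ℝ}
    {t : Finset ι} {S : Set ℝ} (hS : IsCompact S) (hV : ∀ i ∈ t, Convex ℝ (V i))
    (hVS : ∀ i ∈ t, Disjoint (V i) S) (hcover : convexHull ℝ S \ S ⊆ ⋃ i ∈ t, V i) :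
    IsFinUnionIcc (t.card + 1) S := by
  induction t using Finset.strongInduction generalizing S with
  | H t ih =>
  classical
  have hcover' : ∀ x ∈ convexHull ℝ S \ S, ∃ i ∈ t, x ∈ V i := fun x hx => by
    simpa using hcover hx
  by_cases hconv : convexHull ℝ S ⊆ S
  · exact (hS.isFinUnionIcc_one_of_convex
      (convexHull_eq_self.1 (hconv.antisymm (subset_convexHull ℝ S)))).mono (by omega)
  obtain ⟨g, hg⟩ := not_subset.1 hconv
  obtain ⟨i₀, hi₀, hgV⟩ := hcover' g hg
  -- split `S` at the gap point `g`; `V i₀` serves neither half, and every other `V i` only one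
  set L := S ∩ Iic g
  set R := S ∩ Ici g
  set tL := (t.erase i₀).filter fun i => (V i ∩ convexHull ℝ L).Nonempty
  set tR := (t.erase i₀).filter fun i => ¬(V i ∩ convexHull ℝ L).Nonempty
  have htL : tL ⊂ t := (Finset.filter_subset _ _).trans_ssubset (Finset.erase_ssubset hi₀)
  have htR : tR ⊂ t := (Finset.filter_subset _ _).trans_ssubset (Finset.erase_ssubset hi₀)
  have hL : IsFinUnionIcc (tL.card + 1) L := by
    refine ih tL htL (hS.inter_right isClosed_Iic) (fun i hi => hV i (htL.subset hi))
      (fun i hi => (hVS i (htL.subset hi)).mono_right inter_subset_left) fun x hx => ?_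
    obtain ⟨i, hi, hxV⟩ := hcover' x (convexHull_inter_diff_subset (convex_Iic g) hx)
    have hii₀ : i ≠ i₀ := by
      rintro rfl
      exact disjoint_left.1 (hS.disjoint_convexHull_inter_Iic (hV i hi) (hVS i hi) hgV le_rfl)
        hxV hx.1
    exact mem_biUnion (Finset.mem_filter.2 ⟨Finset.mem_erase.2 ⟨hii₀, hi⟩, x, hxV, hx.1⟩) hxV
  have hR : IsFinUnionIcc (tR.card + 1) R := by
    refine ih tR htR (hS.inter_right isClosed_Ici) (fun i hi => hV i (htR.subset hi))
      (fun i hi => (hVS i (htR.subset hi)).mono_right inter_subset_left) fun x hx => ?_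
    obtain ⟨i, hi, hxV⟩ := hcover' x (convexHull_inter_diff_subset (convex_Ici g) hx)
    have hgx : g ≤ x := convexHull_min inter_subset_right (convex_Ici g) hx.1
    have hii₀ : i ≠ i₀ := by
      rintro rfl
      exact disjoint_left.1 (hS.disjoint_convexHull_inter_Ici (hV i hi) (hVS i hi) hgV le_rfl)
        hxV hx.1
    have hiL : ¬(V i ∩ convexHull ℝ L).Nonempty := fun ⟨y, hyV, hyL⟩ =>
      disjoint_left.1 (hS.disjoint_convexHull_inter_Iic (hV i hi) (hVS i hi) hxV hgx) hyV hyL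
    exact mem_biUnion (Finset.mem_filter.2 ⟨Finset.mem_erase.2 ⟨hii₀, hi⟩, hiL⟩) hxV
  have hcard : tL.card + tR.card + 1 = t.card := by
    rw [Finset.card_filter_add_card_filter_not, Finset.card_erase_add_one hi₀]
  rw [show S = L ∪ R by rw [← inter_union_distrib_left, Iic_union_Ici, inter_univ]]
  exact (hL.union hR).mono (by omega)

section UpperEnvelope

variable {ι : Type*} {s : Set ℝ} {f : ι → ℝ → ℝ} {v : ℝ → ℝ}

def IsUpperEnvelopeOn (s : Set ℝ) (f : ι → ℝ → ℝ) (v : ℝ → ℝ) : Prop :=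
  ∀ x ∈ s, (∀ j, f j x ≤ v x) ∧ ∃ j, v x = f j x

def argmaxRegion (s : Set ℝ) (f : ι → ℝ → ℝ) (v : ℝ → ℝ) (k : ι) : Set ℝ :=
  {x ∈ s | f k x = v x}

theorem mem_argmaxRegion_iff (hv : IsUpperEnvelopeOn s f v) {k : ι} {x : ℝ} :
    x ∈ argmaxRegion s f v k ↔ x ∈ s ∧ ∀ j, f j x ≤ f k x := by
  refine ⟨fun ⟨hx, hk⟩ => ⟨hx, fun j => hk ▸ (hv x hx).1 j⟩, fun ⟨hx, hk⟩ => ⟨hx, ?_⟩⟩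
  obtain ⟨j, hj⟩ := (hv x hx).2
  exact ((hv x hx).1 k).antisymm (hj ▸ hk j)

theorem isCompact_argmaxRegion (hs : IsCompact s) (hfc : ∀ j, ContinuousOn (f j) s)
    (hv : IsUpperEnvelopeOn s f v) (k : ι) : IsCompact (argmaxRegion s f v k) := by
  have h : argmaxRegion s f v k = ⋂ j, {x ∈ s | f j x ≤ f k x} := by
    ext x
    rw [mem_argmaxRegion_iff hv, mem_iInter]
    exact ⟨fun h j => ⟨h.1, h.2 j⟩, fun h => ⟨(h k).1, fun j => (h j).2⟩⟩
  rw [h]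
  exact hs.of_isClosed_subset (isClosed_iInter fun j => hs.isClosed.isClosed_le (hfc j) (hfc k))
    (iInter_subset_of_subset k inter_subset_left)

variable [LinearOrder ι]

theorem convex_setOf_lt (hs : Convex ℝ s)
    (hf : ∀ i j, i < j → StrictQuasiconcaveOn s (fun x => f i x - f j x)) {j k : ι} (hjk : j < k) :
    Convex ℝ {x ∈ s | f k x < f j x} := by
  simpa only [sub_pos] using ((hf j k hjk).quasiconcaveOn hs).convex_gt 0

theorem exists_lt_of_mem_convexHull_diff_argmaxRegion (hs : Convex ℝ s)
    (hf : ∀ i j, i < j → StrictQuasiconcaveOn s (fun x => f i x - f j x))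
    (hv : IsUpperEnvelopeOn s f v) {k : ι} {x : ℝ}
    (hx : x ∈ convexHull ℝ (argmaxRegion s f v k) \ argmaxRegion s f v k) :
    ∃ j < k, x ∈ argmaxRegion s f v j ∧ f k x < f j x := by
  obtain ⟨hxS, hxA⟩ := hx
  have hC : Convex ℝ {x ∈ s | ∀ j, k < j → f j x ≤ f k x} := fun y hy z hz a b ha hb hab =>
    ⟨hs hy.1 hz.1 ha hb hab, fun j hkj => sub_nonneg.1 ((hf k j hkj).quasiconcaveOn hs 0
      ⟨hy.1, sub_nonneg.2 (hy.2 j hkj)⟩ ⟨hz.1, sub_nonneg.2 (hz.2 j hkj)⟩ ha hb hab).2⟩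
  have hAC : argmaxRegion s f v k ⊆ {x ∈ s | ∀ j, k < j → f j x ≤ f k x} :=
    fun y hy => ⟨hy.1, fun j _ => ((mem_argmaxRegion_iff hv).1 hy).2 j⟩
  obtain ⟨hx, hxC⟩ := convexHull_min hAC hC hxS
  obtain ⟨j, hj⟩ := (hv x hx).2
  have hkv : f k x < v x := ((hv x hx).1 k).lt_of_ne fun h => hxA ⟨hx, h⟩
  refine ⟨j, ?_, ⟨hx, hj.symm⟩, hj ▸ hkv⟩
  by_contra! hkj
  obtain rfl | hkj := hkj.eq_or_lt
  · exact hkv.ne hj.symm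
  · exact (hxC j hkj).not_gt (hj ▸ hkv)

theorem isFinUnionIcc_argmaxRegion [LocallyFiniteOrderBot ι] (hK : IsCompact s)
    (hs : Convex ℝ s) (hfc : ∀ j, ContinuousOn (f j) s)
    (hf : ∀ i j, i < j → StrictQuasiconcaveOn s (fun x => f i x - f j x))
    (hv : IsUpperEnvelopeOn s f v) (k : ι) :
    IsFinUnionIcc ((Finset.Iio k).card + 1) (argmaxRegion s f v k) := by
  refine (isCompact_argmaxRegion hK hfc hv k).isFinUnionIcc_of_convexHull_diff_subset
    (V := fun j => {x ∈ s | f k x < f j x}) (fun j hj => convex_setOf_lt hs hf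
    (Finset.mem_Iio.1 hj)) (fun j _ => disjoint_left.2 fun x hx hxA =>
    (((mem_argmaxRegion_iff hv).1 hxA).2 j).not_gt hx.2) fun x hx => ?_
  obtain ⟨j, hjk, hjA, hlt⟩ := exists_lt_of_mem_convexHull_diff_argmaxRegion hs hf hv hx
  exact mem_biUnion (Finset.mem_Iio.2 hjk) ⟨hjA.1, hlt⟩

end UpperEnvelope

theorem stmt9_general (X : ℝ) (N : ℕ) (u : Fin N → ℝ → ℝ)
    (hu : ∀ i, ContinuousOn (u i) (Icc 0 X))
    (hqc : ∀ i j : Fin N, i < j → ∀ a b : ℝ, 0 < a → 0 < b →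
      ∀ x ∈ Icc (0:ℝ) X, ∀ y ∈ Icc (0:ℝ) X, x ≠ y → ∀ l ∈ Ioo (0:ℝ) 1,
        min (a * u i x - b * u j x) (a * u i y - b * u j y)
          < a * u i (l * x + (1 - l) * y) - b * u j (l * x + (1 - l) * y))
    (α : Fin N → ℝ) (hα : ∀ i, 0 < α i) (b : Fin N → ℝ)
    (v : ℝ → ℝ)
    (hv : ∀ x ∈ Icc (0:ℝ) X,
      (∀ j, α j * u j x + b j ≤ v x) ∧ ∃ j, v x = α j * u j x + b j)
    (k : Fin N)
    (m : ℝ → ℝ)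
    (hm : ∀ x ∈ Icc (0:ℝ) X,
      (∀ j, k < j → α j * u j x + b j ≤ m x) ∧ ∃ j, k < j ∧ m x = α j * u j x + b j) :
    -- η_k is strictly quasi-concave on [0,X]
    (∀ x ∈ Icc (0:ℝ) X, ∀ y ∈ Icc (0:ℝ) X, x ≠ y → ∀ l ∈ Ioo (0:ℝ) 1,
      min (α k * u k x + b k - m x) (α k * u k y + b k - m y)
        < α k * u k (l * x + (1 - l) * y) + b k - m (l * x + (1 - l) * y)) ∧
    -- the argmax region of type k is a union of at most k (1-based) closed intervals
    (∃ aa cc : Fin (k.val + 1) → ℝ,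
      {x ∈ Icc (0:ℝ) X | α k * u k x + b k = v x} = ⋃ i, Icc (aa i) (cc i)) ∧
    -- its convex hull is filled in by argmax regions of more risk-averse types
    (convexHull ℝ {x ∈ Icc (0:ℝ) X | α k * u k x + b k = v x})
        \ {x ∈ Icc (0:ℝ) X | α k * u k x + b k = v x}
      ⊆ ⋃ j < k, {x ∈ Icc (0:ℝ) X | α j * u j x + b j = v x} := by
  set f : Fin N → ℝ → ℝ := fun j x => α j * u j x + b j
  have hf : ∀ i j, i < j → StrictQuasiconcaveOn (Icc 0 X) (fun x => f i x - f j x) := by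
    intro i j hij
    convert StrictQuasiconcaveOn.add_const (hqc i j hij _ _ (hα i) (hα j)) (b i - b j) using 2
    ring
  have hfc : ∀ j, ContinuousOn (f j) (Icc 0 X) := fun j => by fun_prop
  refine ⟨?_, ?_, fun x hx => ?_⟩
  · refine StrictQuasiconcaveOn.of_forall_le_of_exists_eq (convex_Icc 0 X) (hf k)
      (fun x hx j hkj => sub_le_sub_left ((hm x hx).1 j hkj) _) fun x hx => ?_
    obtain ⟨j, hkj, hj⟩ := (hm x hx).2
    exact ⟨j, hkj, by rw [hj]⟩
  · have h := isFinUnionIcc_argmaxRegion isCompact_Icc (convex_Icc 0 X) hfc hf hv k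
    rwa [Fin.card_Iio] at h
  · obtain ⟨j, hjk, hj, -⟩ :=
      exists_lt_of_mem_convexHull_diff_argmaxRegion (convex_Icc 0 X) hf hv hx
    exact mem_iUnion₂.2 ⟨j, hjk, hj⟩

/-- Claim B3: for types ordered by risk aversion (pairwise weighted
differences strictly quasi-concave), the upper envelope `v = max_j (α_j u_j + b_j)`
has structured argmax regions: the set where type `k` attains `v` is a union of at
most `k` (1-based) closed intervals; whatever of its convex hull it misses is covered
by argmax regions of more risk-averse (lower-index) types; and
`η_k = α_k u_k + b_k − max_{j>k}(α_j u_j + b_j)` is strictly quasi-concave. -/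
theorem stmt9 (X : ℝ) (hX : 0 < X) (N : ℕ) (u : Fin N → ℝ → ℝ)
    (hu : ∀ i, ContinuousOn (u i) (Icc 0 X))
    (hudec : ∀ i, StrictAntiOn (u i) (Icc 0 X))
    (hqc : ∀ i j : Fin N, i < j → ∀ a b : ℝ, 0 < a → 0 < b →
      ∀ x ∈ Icc (0:ℝ) X, ∀ y ∈ Icc (0:ℝ) X, x ≠ y → ∀ l ∈ Ioo (0:ℝ) 1,
        min (a * u i x - b * u j x) (a * u i y - b * u j y)
          < a * u i (l * x + (1 - l) * y) - b * u j (l * x + (1 - l) * y))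
    (α : Fin N → ℝ) (hα : ∀ i, 0 < α i) (b : Fin N → ℝ)
    (v : ℝ → ℝ)
    (hv : ∀ x ∈ Icc (0:ℝ) X,
      (∀ j, α j * u j x + b j ≤ v x) ∧ ∃ j, v x = α j * u j x + b j)
    (k : Fin N)
    (m : ℝ → ℝ)
    (hm : ∀ x ∈ Icc (0:ℝ) X,
      (∀ j, k < j → α j * u j x + b j ≤ m x) ∧ ∃ j, k < j ∧ m x = α j * u j x + b j) :
    -- η_k is strictly quasi-concave on [0,X]
    (∀ x ∈ Icc (0:ℝ) X, ∀ y ∈ Icc (0:ℝ) X, x ≠ y → ∀ l ∈ Ioo (0:ℝ) 1,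
      min (α k * u k x + b k - m x) (α k * u k y + b k - m y)
        < α k * u k (l * x + (1 - l) * y) + b k - m (l * x + (1 - l) * y)) ∧
    -- the argmax region of type k is a union of at most k (1-based) closed intervals
    (∃ aa cc : Fin (k.val + 1) → ℝ,
      {x ∈ Icc (0:ℝ) X | α k * u k x + b k = v x} = ⋃ i, Icc (aa i) (cc i)) ∧
    -- its convex hull is filled in by argmax regions of more risk-averse types
    (convexHull ℝ {x ∈ Icc (0:ℝ) X | α k * u k x + b k = v x})
        \ {x ∈ Icc (0:ℝ) X | α k * u k x + b k = v x}
      ⊆ ⋃ j < k, {x ∈ Icc (0:ℝ) X | α j * u j x + b j = v x} :=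
  stmt9_general X N u hu hqc α hα b v hv k m hm
end

section
/- Let (q_1,...,q_N) be a feasible allocation of supply f over [0, X̄] with no disposal (Σ_i μ_i q_i(x) = f(x) a.e. on [0, X̄], and q_i([0, X̄]) = 1 for all i) and no inverted spread between any pair j < k. Then for all j < k, the support of q_k intersects the convex hull of the support of q_j in a set of Lebesgue measure zero. -/
/-!
If the support of `q_k` met the convex hull of the support of `q_j` in a set of positive
measure, that set could not consist of the (at most two) extreme points of the hull, so
some `x` in the support of `q_k` lies strictly between two support points `a < x < b` of
`q_j`. Cutting `[0, X̄]` at `u ∈ (a, x)` and `v ∈ (x, b)` gives three ordered pieces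
charged by `q_j`, `q_k`, `q_j` respectively: an inverted spread.
-/

open Set MeasureTheory

def lotterySupport (q : Measure ℝ) : Set ℝ := {x | ∀ U ∈ nhds x, 0 < q U}

section ConvexHull

variable {𝕜 : Type*} [Field 𝕜] [LinearOrder 𝕜] [IsStrictOrderedRing 𝕜]

theorem subsingleton_convexHull_inter_lowerBounds (T : Set 𝕜) :
    (convexHull 𝕜 T ∩ lowerBounds T).Subsingleton := by
  have hle : ∀ x ∈ lowerBounds T, ∀ y ∈ convexHull 𝕜 T, x ≤ y := fun x hx y hy =>
    convexHull_min (fun _ ha => hx ha) (convex_Ici x) hy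
  exact fun x hx y hy => le_antisymm (hle x hx.2 y hy.1) (hle y hy.2 x hx.1)

theorem subsingleton_convexHull_inter_upperBounds (T : Set 𝕜) :
    (convexHull 𝕜 T ∩ upperBounds T).Subsingleton := by
  have hle : ∀ x ∈ upperBounds T, ∀ y ∈ convexHull 𝕜 T, y ≤ x := fun x hx y hy =>
    convexHull_min (fun _ ha => hx ha) (convex_Iic x) hy
  exact fun x hx y hy => le_antisymm (hle y hy.2 x hx.1) (hle x hx.2 y hy.1)

end ConvexHull

theorem exists_mem_strictly_between_of_measure_convexHull_inter_ne_zero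
    {ν : Measure ℝ} [NullSingletonClass ν] {T S : Set ℝ} (h : ν (convexHull ℝ T ∩ S) ≠ 0) :
    ∃ x ∈ S, (∃ a ∈ T, a < x) ∧ (∃ b ∈ T, x < b) := by
  by_contra! hnot
  have hcover : convexHull ℝ T ∩ S ⊆
      (convexHull ℝ T ∩ lowerBounds T) ∪ (convexHull ℝ T ∩ upperBounds T) := by
    intro x ⟨hxT, hxS⟩
    by_cases hlow : ∃ a ∈ T, a < x
    · exact Or.inr ⟨hxT, fun b hb => hnot x hxS hlow b hb⟩
    · exact Or.inl ⟨hxT, fun a ha => not_lt.1 fun hax => hlow ⟨a, ha, hax⟩⟩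
  refine h (measure_mono_null hcover (measure_union_null ?_ ?_))
  · exact (subsingleton_convexHull_inter_lowerBounds T).measure_zero ν
  · exact (subsingleton_convexHull_inter_upperBounds T).measure_zero ν

theorem measure_inter_pos_of_mem_lotterySupport {q : Measure ℝ} {K U : Set ℝ} {x : ℝ}
    (hx : x ∈ lotterySupport q) (hU : U ∈ nhds x) (hK : q Kᶜ = 0) : 0 < q (K ∩ U) := by
  rw [inter_comm, measure_inter_conull hK]
  exact hx U hU

theorem stmt11_general (Xb : ℝ) (N : ℕ)
    (q : Fin N → Measure ℝ)
    (hsupp : ∀ i, q i (Icc (0:ℝ) Xb)ᶜ = 0)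
    (hnospread : ∀ j k : Fin N, j < k →
      ¬ ∃ A B C : Set ℝ, MeasurableSet A ∧ MeasurableSet B ∧ MeasurableSet C ∧
        A ⊆ Icc 0 Xb ∧ B ⊆ Icc 0 Xb ∧ C ⊆ Icc 0 Xb ∧
        (∀ a ∈ A, ∀ b ∈ B, a < b) ∧ (∀ b ∈ B, ∀ c ∈ C, b < c) ∧
        0 < q j A ∧ 0 < q k B ∧ 0 < q j C) :
    ∀ j k : Fin N, j < k →
      volume (convexHull ℝ (lotterySupport (q j)) ∩ lotterySupport (q k)) = 0 := by
  intro j k hjk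
  by_contra hvol
  obtain ⟨x, hxk, ⟨a, haj, hax⟩, ⟨b, hbj, hxb⟩⟩ :=
    exists_mem_strictly_between_of_measure_convexHull_inter_ne_zero hvol
  obtain ⟨u, hau, hux⟩ := exists_between hax
  obtain ⟨v, hxv, hvb⟩ := exists_between hxb
  refine hnospread j k hjk ⟨Icc 0 Xb ∩ Iio u, Icc 0 Xb ∩ Ioo u v, Icc 0 Xb ∩ Ioi v,
    measurableSet_Icc.inter measurableSet_Iio, measurableSet_Icc.inter measurableSet_Ioo,
    measurableSet_Icc.inter measurableSet_Ioi,
    inter_subset_left, inter_subset_left, inter_subset_left,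
    fun _ ha _ hb => ha.2.trans hb.2.1, fun _ hb _ hc => hb.2.2.trans hc.2, ?_, ?_, ?_⟩
  · exact measure_inter_pos_of_mem_lotterySupport haj (Iio_mem_nhds hau) (hsupp j)
  · exact measure_inter_pos_of_mem_lotterySupport hxk (Ioo_mem_nhds hux hxv) (hsupp k)
  · exact measure_inter_pos_of_mem_lotterySupport hbj (Ioi_mem_nhds hvb) (hsupp j)

/-- Claim B1: in a feasible allocation with no disposal
(`Σ_i μ_i q_i` equals the supply on `[0, X̄]`, each `q_i` a lottery on `[0, X̄]`)
and no inverted spread between any pair `j < k`, the support of `q_k` meets the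
convex hull of the support of `q_j` in a Lebesgue-null set, for all `j < k`. -/
theorem stmt11 (Xb : ℝ) (hXb : 0 < Xb) (N : ℕ) (μ : Fin N → ℝ) (hμ : ∀ i, 0 < μ i)
    (f : ℝ → ℝ) (hf : ContinuousOn f (Icc 0 Xb)) (hfpos : ∀ x ∈ Icc (0:ℝ) Xb, 0 < f x)
    (q : Fin N → Measure ℝ) (hprob : ∀ i, IsProbabilityMeasure (q i))
    (hsupp : ∀ i, q i (Icc (0:ℝ) Xb)ᶜ = 0)
    (hnodisp : ∑ i, ENNReal.ofReal (μ i) • q i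
        = (volume.restrict (Icc (0:ℝ) Xb)).withDensity (fun x => ENNReal.ofReal (f x)))
    (hnospread : ∀ j k : Fin N, j < k →
      ¬ ∃ A B C : Set ℝ, MeasurableSet A ∧ MeasurableSet B ∧ MeasurableSet C ∧
        A ⊆ Icc 0 Xb ∧ B ⊆ Icc 0 Xb ∧ C ⊆ Icc 0 Xb ∧
        (∀ a ∈ A, ∀ b ∈ B, a < b) ∧ (∀ b ∈ B, ∀ c ∈ C, b < c) ∧
        0 < q j A ∧ 0 < q k B ∧ 0 < q j C) :
    ∀ j k : Fin N, j < k →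
      volume (convexHull ℝ (lotterySupport (q j)) ∩ lotterySupport (q k)) = 0 :=
  stmt11_general Xb N q hsupp hnospread
end

section
/- Suppose an optimal incentive-compatible allocation (q_1,...,q_N) has a directed cycle of binding incentive constraints: there exist distinct types k_1,...,k_m with V_{k_i}(q_{k_i}) = V_{k_i}(q_{k_{i+1}}) for i = 1,...,m (indices mod m). Then the allocation q' defined by q'_{k_i} = (1 − ε/μ_{k_i}) q_{k_i} + (ε/μ_{k_i}) q_{k_{i+1}} for ε = (1/2)·min_j μ_j, and q'_j = q_j for other types, is feasible, incentive compatible, gives every type the same expected utility as q, and hence achieves the same welfare while q' ≠ q whenever the q_{k_i} are pairwise distinct. -/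
open MeasureTheory

/-!
Shifting the mass `ε` from each `q_{k_i}` to its successor `q_{k_{i+1}}` around the cycle leaves the
weighted total `∑ μ_i q_i` unchanged, since every lottery on the cycle loses `ε` and gains `ε`. The
new lottery of `k_i` is a mixture of two lotteries that `k_i` values equally (the constraint
`k_i → k_{i+1}` binds), so `k_i`'s utility is unchanged, while any other type values each mixture
at most as much as before, which is at most its own unchanged utility. Finally, `q'_{k_1} = q_{k_1}`
would force `q_{k_2} = q_{k_1}`, because the mixing weight `ε / μ_{k_1}` is positive.
-/

theorem ENNReal.ofReal_one_sub_add_ofReal {t : ℝ} (ht₀ : 0 ≤ t) (ht₁ : t ≤ 1) :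
    ENNReal.ofReal (1 - t) + ENNReal.ofReal t = 1 := by
  rw [← ENNReal.ofReal_add (sub_nonneg.2 ht₁) ht₀, sub_add_cancel, ENNReal.ofReal_one]

theorem Function.forall_of_forall_comp_of_forall_ne {α β : Type*} (k : α → β) {p : β → Prop}
    (hrange : ∀ i, p (k i)) (hoff : ∀ j, (∀ i, k i ≠ j) → p j) : ∀ j, p j := by
  intro j
  by_cases h : ∃ i, k i = j
  · obtain ⟨i, rfl⟩ := h
    exact hrange i
  · exact hoff j fun i hi => h ⟨i, hi⟩

section Mixture

variable {Ω : Type*} [MeasurableSpace Ω] {P Q : Measure Ω} {t : ℝ}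

theorem isProbabilityMeasure_ofReal_smul_add_ofReal_smul [IsProbabilityMeasure P]
    [IsProbabilityMeasure Q] (ht₀ : 0 ≤ t) (ht₁ : t ≤ 1) :
    IsProbabilityMeasure (ENNReal.ofReal (1 - t) • P + ENNReal.ofReal t • Q) := by
  constructor
  simp only [Measure.add_apply, Measure.smul_apply, measure_univ, smul_eq_mul, mul_one]
  exact ENNReal.ofReal_one_sub_add_ofReal ht₀ ht₁

theorem integral_ofReal_smul_add_ofReal_smul {f : Ω → ℝ} (hP : Integrable f P)
    (hQ : Integrable f Q) (ht₀ : 0 ≤ t) (ht₁ : t ≤ 1) :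
    ∫ ω, f ω ∂(ENNReal.ofReal (1 - t) • P + ENNReal.ofReal t • Q) =
      (1 - t) * ∫ ω, f ω ∂P + t * ∫ ω, f ω ∂Q := by
  rw [integral_add_measure (hP.smul_measure ENNReal.ofReal_ne_top)
      (hQ.smul_measure ENNReal.ofReal_ne_top), integral_smul_measure, integral_smul_measure,
    ENNReal.toReal_ofReal (sub_nonneg.2 ht₁), ENNReal.toReal_ofReal ht₀, smul_eq_mul, smul_eq_mul]

theorem eq_of_ofReal_smul_add_ofReal_smul_eq_left [IsFiniteMeasure P] (ht₀ : 0 < t) (ht₁ : t ≤ 1)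
    (h : ENNReal.ofReal (1 - t) • P + ENNReal.ofReal t • Q = P) : Q = P := by
  ext s -
  have hs := congrArg (· s) h
  simp only [Measure.add_apply, Measure.smul_apply, smul_eq_mul] at hs
  nth_rw 2 [← one_mul (P s)] at hs
  rw [← ENNReal.ofReal_one_sub_add_ofReal ht₀.le ht₁, add_mul,
    ENNReal.add_right_inj (ENNReal.mul_ne_top ENNReal.ofReal_ne_top (measure_ne_top P s)),
    ENNReal.mul_right_inj (ENNReal.ofReal_pos.2 ht₀).ne' ENNReal.ofReal_ne_top] at hs
  exact hs

theorem Fin.sum_ofReal_smul_mix_succ_eq_sum {n : ℕ} [NeZero n] (w : Fin n → ℝ) (P : Fin n → Measure Ω)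
    {ε : ℝ} (hε : 0 ≤ ε) (hw : ∀ j, ε ≤ w j) :
    ∑ j, ENNReal.ofReal (w j) •
        (ENNReal.ofReal (1 - ε / w j) • P j + ENNReal.ofReal (ε / w j) • P (j + 1)) =
      ∑ j, ENNReal.ofReal (w j) • P j := by
  have hterm (j : Fin n) : ENNReal.ofReal (w j) •
      (ENNReal.ofReal (1 - ε / w j) • P j + ENNReal.ofReal (ε / w j) • P (j + 1)) =
        ENNReal.ofReal (w j - ε) • P j + ENNReal.ofReal ε • P (j + 1) := by
    have hwε : w j * (ε / w j) = ε := by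
      rcases (hε.trans (hw j)).eq_or_lt with h | h
      · have : ε = 0 := le_antisymm (h ▸ hw j) hε
        simp [← h, this]
      · exact mul_div_cancel₀ ε h.ne'
    rw [smul_add, smul_smul, smul_smul, ← ENNReal.ofReal_mul (hε.trans (hw j)),
      ← ENNReal.ofReal_mul (hε.trans (hw j)), mul_one_sub, hwε]
  calc _ = ∑ j, (ENNReal.ofReal (w j - ε) • P j + ENNReal.ofReal ε • P (j + 1)) :=
        Finset.sum_congr rfl fun j _ => hterm j
    _ = ∑ j, ENNReal.ofReal (w j - ε) • P j + ∑ j, ENNReal.ofReal ε • P j := by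
        rw [Finset.sum_add_distrib]
        congr 1
        exact Fintype.sum_equiv (Equiv.addRight 1) _ _ fun _ => rfl
    _ = ∑ j, ENNReal.ofReal (w j) • P j := by
        rw [← Finset.sum_add_distrib]
        refine Finset.sum_congr rfl fun j _ => ?_
        rw [← add_smul, ← ENNReal.ofReal_add (sub_nonneg.2 (hw j)) hε, sub_add_cancel]

end Mixture

theorem Fintype.sum_eq_sum_of_eq_off_range {ι κ M : Type*} [Fintype ι] [Fintype κ]
    [AddCommMonoid M] {k : κ → ι} (hk : Function.Injective k) {f g : ι → M}
    (hoff : ∀ i, (∀ j, k j ≠ i) → f i = g i) (hon : ∑ j, f (k j) = ∑ j, g (k j)) :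
    ∑ i, f i = ∑ i, g i := by
  classical
  have hsplit (h : ι → M) :
      ∑ i, h i = ∑ i ∈ (Finset.univ.image k)ᶜ, h i + ∑ j, h (k j) := by
    rw [← Finset.sum_image fun x _ y _ hxy => hk hxy, Finset.sum_compl_add_sum]
  rw [hsplit f, hsplit g, hon]
  congr 1
  exact Finset.sum_congr rfl fun i hi => hoff i fun j hj => by simp_all

/-- Proposition 5, Part 2, the cycle-breaking construction: if an optimal
incentive-compatible allocation has a directed cycle `k_1 → k_2 → ⋯ → k_m → k_1`
(`m ≥ 2`) of binding IC constraints, then the mixed allocation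
`q'_{k_i} = (1 − ε/μ_{k_i}) q_{k_i} + (ε/μ_{k_i}) q_{k_{i+1}}`, `ε = (1/2)·min_j μ_j`,
with `q'_j = q_j` for all other types, is feasible, incentive compatible, gives every
type the same expected utility (hence the same welfare), and differs from `q` whenever
the lotteries `q_{k_i}` are pairwise distinct. -/
theorem stmt12 {Ω : Type*} [MeasurableSpace Ω] (N : ℕ)
    (μ : Fin N → ℝ) (hμ : ∀ i, 0 < μ i)
    (u : Fin N → Ω → ℝ) (ν : Measure Ω)
    (q : Fin N → Measure Ω) (hprob : ∀ i, IsProbabilityMeasure (q i))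
    (hint : ∀ l j, Integrable (u l) (q j))
    (hfeas : ∑ i, ENNReal.ofReal (μ i) • q i ≤ ν)
    (hIC : ∀ l j : Fin N, ∫ ω, u l ω ∂(q j) ≤ ∫ ω, u l ω ∂(q l))
    (m : ℕ) (k : Fin (m + 2) → Fin N) (hkinj : Function.Injective k)
    (hbind : ∀ i : Fin (m + 2), ∫ ω, u (k i) ω ∂(q (k i)) = ∫ ω, u (k i) ω ∂(q (k (i + 1))))
    (ε : ℝ) (hε : (∃ j, ε = μ j / 2) ∧ ∀ j, ε ≤ μ j / 2)
    (q' : Fin N → Measure Ω)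
    (hq'cyc : ∀ i : Fin (m + 2), q' (k i) =
      ENNReal.ofReal (1 - ε / μ (k i)) • q (k i) + ENNReal.ofReal (ε / μ (k i)) • q (k (i + 1)))
    (hq'other : ∀ j : Fin N, (∀ i, k i ≠ j) → q' j = q j) :
    (∀ i, IsProbabilityMeasure (q' i)) ∧
    (∑ i, ENNReal.ofReal (μ i) • q' i ≤ ν) ∧
    (∀ l j : Fin N, ∫ ω, u l ω ∂(q' j) ≤ ∫ ω, u l ω ∂(q' l)) ∧
    (∀ l : Fin N, ∫ ω, u l ω ∂(q' l) = ∫ ω, u l ω ∂(q l)) ∧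
    (Function.Injective (fun i => q (k i)) → q' ≠ q) := by
  obtain ⟨⟨j₀, hj₀⟩, hεle⟩ := hε
  have hε₀ : 0 < ε := hj₀ ▸ half_pos (hμ j₀)
  have ht₀ (i : Fin (m + 2)) : 0 < ε / μ (k i) := div_pos hε₀ (hμ (k i))
  have ht₁ (i : Fin (m + 2)) : ε / μ (k i) ≤ 1 :=
    (div_le_one (hμ (k i))).2 (by linarith [hεle (k i), hμ (k i)])
  have hq'int (l : Fin N) (i : Fin (m + 2)) : ∫ ω, u l ω ∂(q' (k i)) =
      (1 - ε / μ (k i)) * ∫ ω, u l ω ∂(q (k i)) + ε / μ (k i) * ∫ ω, u l ω ∂(q (k (i + 1))) := by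
    rw [hq'cyc i]
    exact integral_ofReal_smul_add_ofReal_smul (hint _ _) (hint _ _) (ht₀ i).le (ht₁ i)
  have hutil : ∀ l, ∫ ω, u l ω ∂(q' l) = ∫ ω, u l ω ∂(q l) :=
    Function.forall_of_forall_comp_of_forall_ne k
      (fun i => by rw [hq'int, ← hbind i]; ring) fun j hj => by rw [hq'other j hj]
  refine ⟨Function.forall_of_forall_comp_of_forall_ne k (fun i => ?_) fun j hj => ?_, ?_,
    fun l => Function.forall_of_forall_comp_of_forall_ne k (fun i => ?_) fun j hj => ?_, hutil, ?_⟩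
  · rw [hq'cyc i]
    exact isProbabilityMeasure_ofReal_smul_add_ofReal_smul (ht₀ i).le (ht₁ i)
  · rw [hq'other j hj]
    exact hprob j
  · refine le_of_eq_of_le (Fintype.sum_eq_sum_of_eq_off_range hkinj
      (fun j hj => by rw [hq'other j hj]) ?_) hfeas
    simp_rw [hq'cyc]
    exact Fin.sum_ofReal_smul_mix_succ_eq_sum _ (fun i => q (k i)) hε₀.le
      fun i => by linarith [hεle (k i), hμ (k i)]
  · rw [hutil, hq'int]
    exact convex_Iic _ (Set.mem_Iic.2 (hIC l (k i))) (Set.mem_Iic.2 (hIC l (k (i + 1))))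
      (sub_nonneg.2 (ht₁ i)) (ht₀ i).le (sub_add_cancel 1 _)
  · rw [hutil, hq'other j hj]
    exact hIC l j
  · intro hinj hq'q
    have hmix := eq_of_ofReal_smul_add_ofReal_smul_eq_left (ht₀ 0) (ht₁ 0)
      ((hq'cyc 0).symm.trans (congrFun hq'q (k 0)))
    simpa using hinj hmix
end

section
/- Let A ◁ B ◁ C be nonempty measurable subsets of [0, X̄] (every point of A strictly below every point of B strictly below every point of C), let f be a strictly positive continuous density, and let u be a continuous strictly decreasing function. Then there is a unique γ ∈ (0,1) such that ∫ u d(γ·(f|A) + (1−γ)·(f|C)) = ∫ u d(f|B), where f|S denotes the normalization of f restricted to S. Moreover, if u₁, u₂ are two such utility functions with u₂ 'less risk averse' than u₁ in the sense that for every x ∈ B, the two-point indifference mixing weight for u₂ is strictly below that for u₁, then γ₂(A,B,C) < γ₁(A,B,C). -/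
open Set MeasureTheory

/-!
Averaging against `f|S` is an affine, strictly monotone functional of `u`. If `S` lies below `T`,
comparing both averages of a strictly decreasing `u` with `u (sup S)` shows that the `f|S`-average
exceeds the `f|T`-average. Hence the `f|B`-average lies strictly between the other two, which gives
the unique weight `γ = (⟨u⟩_B - ⟨u⟩_C) / (⟨u⟩_A - ⟨u⟩_C)`. By affinity this `γ` is the
`f|B`-average of the two-point weights `γ(A, δₓ, C)`, so their pointwise comparison integrates to
`γ₂ < γ₁`.
-/

/-- The value of the normalized restriction `f | S` of the supply `f` to `S` under
utility `u`: the `f`-weighted average of `u` over `S`. -/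
noncomputable def wAvg (f u : ℝ → ℝ) (S : Set ℝ) : ℝ :=
  (∫ x in S, u x * f x) / (∫ x in S, f x)

theorem setIntegral_pos_of_forall_pos {α : Type*} [MeasurableSpace α] {μ : Measure α}
    {g : α → ℝ} {s : Set α} (hs : MeasurableSet s) (hg : IntegrableOn g s μ)
    (hpos : ∀ x ∈ s, 0 < g x) (hμ : μ s ≠ 0) : 0 < ∫ x in s, g x ∂μ := by
  rw [setIntegral_pos_iff_support_of_nonneg_ae
    ((ae_restrict_iff' hs).2 (ae_of_all _ fun x hx => (hpos x hx).le)) hg,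
    inter_eq_right.2 fun x hx => Function.mem_support.2 (hpos x hx).ne']
  exact pos_iff_ne_zero.2 hμ

theorem measure_ne_zero_of_setIntegral_ne_zero {α : Type*} [MeasurableSpace α] {μ : Measure α}
    {g : α → ℝ} {s : Set α} (hg : ∫ x in s, g x ∂μ ≠ 0) : μ s ≠ 0 := fun h =>
  hg (by rw [Measure.restrict_eq_zero.2 h, integral_zero_measure])

theorem nonempty_of_setIntegral_ne_zero {α : Type*} [MeasurableSpace α] {μ : Measure α}
    {g : α → ℝ} {s : Set α} (hg : ∫ x in s, g x ∂μ ≠ 0) : s.Nonempty :=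
  nonempty_iff_ne_empty.2 fun h => hg (by rw [h, Measure.restrict_empty, integral_zero_measure])

section wAvg

variable {f u v : ℝ → ℝ} {S : Set ℝ}

theorem wAvg_const (c : ℝ) (hmass : ∫ x in S, f x ≠ 0) : wAvg f (fun _ => c) S = c := by
  rw [wAvg, integral_const_mul, mul_div_cancel_right₀ _ hmass]

theorem wAvg_affine (k l : ℝ) (hmass : ∫ x in S, f x ≠ 0) (hf : IntegrableOn f S)
    (hu : IntegrableOn (fun x => u x * f x) S) :
    wAvg f (fun x => k * u x + l) S = k * wAvg f u S + l := by
  simp only [wAvg, add_mul, mul_assoc]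
  rw [integral_add (hu.const_mul k) (hf.const_mul l), integral_const_mul, integral_const_mul]
  field_simp

theorem wAvg_le_wAvg (hS : MeasurableSet S) (hf : ∀ x ∈ S, 0 ≤ f x)
    (hmass : 0 < ∫ x in S, f x) (hu : IntegrableOn (fun x => u x * f x) S)
    (hv : IntegrableOn (fun x => v x * f x) S) (huv : ∀ x ∈ S, u x ≤ v x) :
    wAvg f u S ≤ wAvg f v S :=
  div_le_div_of_nonneg_right
    (setIntegral_mono_on hu hv hS fun x hx => mul_le_mul_of_nonneg_right (huv x hx) (hf x hx))
    hmass.le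

theorem wAvg_lt_wAvg (hS : MeasurableSet S) (hf : ∀ x ∈ S, 0 < f x)
    (hmass : 0 < ∫ x in S, f x) (hu : IntegrableOn (fun x => u x * f x) S)
    (hv : IntegrableOn (fun x => v x * f x) S) (huv : ∀ x ∈ S, u x < v x) :
    wAvg f u S < wAvg f v S := by
  have hgap : 0 < ∫ x in S, (v x * f x - u x * f x) :=
    setIntegral_pos_of_forall_pos hS (hv.sub hu)
      (fun x hx => by nlinarith [huv x hx, hf x hx])
      (measure_ne_zero_of_setIntegral_ne_zero hmass.ne')
  rw [integral_sub hv hu, sub_pos] at hgap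
  exact div_lt_div_of_pos_right hgap hmass

end wAvg

theorem StrictAntiOn.wAvg_lt_wAvg_of_lt {f u : ℝ → ℝ} {I S T : Set ℝ}
    (hu : StrictAntiOn u I) (hI : I.OrdConnected) (hSI : S ⊆ I) (hTI : T ⊆ I)
    (hS : MeasurableSet S) (hT : MeasurableSet T) (hfpos : ∀ x ∈ I, 0 < f x)
    (hf : IntegrableOn f I) (huf : IntegrableOn (fun x => u x * f x) I)
    (hST : ∀ s ∈ S, ∀ t ∈ T, s < t)
    (hSmass : 0 < ∫ x in S, f x) (hTmass : 0 < ∫ x in T, f x) :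
    wAvg f u T < wAvg f u S := by
  obtain ⟨s₀, hs₀⟩ := nonempty_of_setIntegral_ne_zero hSmass.ne'
  obtain ⟨t₀, ht₀⟩ := nonempty_of_setIntegral_ne_zero hTmass.ne'
  set m := sSup S
  have hsm : ∀ s ∈ S, s ≤ m := fun s hs => le_csSup ⟨t₀, fun s hs => (hST s hs t₀ ht₀).le⟩ hs
  have hmt : ∀ t ∈ T, m ≤ t := fun t ht => csSup_le ⟨s₀, hs₀⟩ fun s hs => (hST s hs t ht).le
  have hmI : m ∈ I := hI.out (hSI hs₀) (hTI ht₀) ⟨hsm s₀ hs₀, hmt t₀ ht₀⟩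
  have hfS : ∀ x ∈ S, 0 < f x := fun x hx => hfpos x (hSI hx)
  have hfT : ∀ x ∈ T, 0 < f x := fun x hx => hfpos x (hTI hx)
  have hcS : IntegrableOn (fun x => u m * f x) S := (hf.mono_set hSI).const_mul _
  have hcT : IntegrableOn (fun x => u m * f x) T := (hf.mono_set hTI).const_mul _
  have huS := huf.mono_set hSI
  have huT := huf.mono_set hTI
  have hmS : u m = wAvg f (fun _ => u m) S := (wAvg_const _ hSmass.ne').symm
  have hmT : wAvg f (fun _ => u m) T = u m := wAvg_const _ hTmass.ne'
  -- `m` lies outside `S` or outside `T`, which makes one of the two comparisons strict.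
  by_cases hm : m ∈ S
  · calc wAvg f u T < wAvg f (fun _ => u m) T :=
          wAvg_lt_wAvg hT hfT hTmass huT hcT fun t ht =>
            hu hmI (hTI ht) (hST m hm t ht)
      _ = wAvg f (fun _ => u m) S := hmT.trans hmS
      _ ≤ wAvg f u S :=
          wAvg_le_wAvg hS (fun x hx => (hfS x hx).le) hSmass hcS huS fun s hs =>
            hu.antitoneOn (hSI hs) hmI (hsm s hs)
  · calc wAvg f u T ≤ wAvg f (fun _ => u m) T :=
          wAvg_le_wAvg hT (fun x hx => (hfT x hx).le) hTmass huT hcT fun t ht =>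
            hu.antitoneOn hmI (hTI ht) (hmt t ht)
      _ = wAvg f (fun _ => u m) S := hmT.trans hmS
      _ < wAvg f u S :=
          wAvg_lt_wAvg hS hfS hSmass hcS huS fun s hs =>
            hu (hSI hs) hmI ((hsm s hs).lt_of_ne fun h => hm (h ▸ hs))

noncomputable def mixWeight (a c y : ℝ) : ℝ := (y - c) / (a - c)

theorem mixWeight_mix {a c : ℝ} (hac : a ≠ c) (y : ℝ) :
    mixWeight a c y * a + (1 - mixWeight a c y) * c = y := by
  have : a - c ≠ 0 := sub_ne_zero.2 hac
  unfold mixWeight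
  field_simp
  ring

theorem eq_mixWeight {a c y γ : ℝ} (hac : a ≠ c) (h : γ * a + (1 - γ) * c = y) :
    γ = mixWeight a c y := by
  rw [mixWeight, eq_div_iff (sub_ne_zero.2 hac), ← h]
  ring

theorem existsUnique_mix_eq {a b c : ℝ} (hcb : c < b) (hba : b < a) :
    ∃! γ : ℝ, γ ∈ Ioo (0:ℝ) 1 ∧ γ * a + (1 - γ) * c = b := by
  refine ⟨mixWeight a c b, ⟨⟨div_pos (by linarith) (by linarith),
    (div_lt_one (by linarith)).2 (by linarith)⟩, mixWeight_mix (by linarith) b⟩, ?_⟩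
  rintro γ ⟨-, hγ⟩
  exact eq_mixWeight (by linarith) hγ

theorem wAvg_mixWeight {f u : ℝ → ℝ} {S : Set ℝ} (a c : ℝ) (hmass : ∫ x in S, f x ≠ 0)
    (hf : IntegrableOn f S) (hu : IntegrableOn (fun x => u x * f x) S) :
    wAvg f (fun x => mixWeight a c (u x)) S = mixWeight a c (wAvg f u S) := by
  have haff : ∀ y, mixWeight a c y = (a - c)⁻¹ * y + -((a - c)⁻¹ * c) := fun y => by
    rw [mixWeight]; ring
  simp only [haff]
  exact wAvg_affine _ _ hmass hf hu

theorem stmt13_general (Xb : ℝ)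
    (f : ℝ → ℝ) (hf : ContinuousOn f (Icc 0 Xb)) (hfpos : ∀ x ∈ Icc (0:ℝ) Xb, 0 < f x)
    (A B C : Set ℝ) (hA : MeasurableSet A) (hB : MeasurableSet B) (hC : MeasurableSet C)
    (hAsub : A ⊆ Icc 0 Xb) (hBsub : B ⊆ Icc 0 Xb) (hCsub : C ⊆ Icc 0 Xb)
    (hAB : ∀ a ∈ A, ∀ b ∈ B, a < b) (hBC : ∀ b ∈ B, ∀ c ∈ C, b < c)
    (hAmass : 0 < ∫ x in A, f x) (hBmass : 0 < ∫ x in B, f x) (hCmass : 0 < ∫ x in C, f x)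
    (u₁ u₂ : ℝ → ℝ)
    (hu₁c : ContinuousOn u₁ (Icc 0 Xb)) (hu₂c : ContinuousOn u₂ (Icc 0 Xb))
    (hu₁a : StrictAntiOn u₁ (Icc 0 Xb)) (hu₂a : StrictAntiOn u₂ (Icc 0 Xb))
    (hcmp : ∀ x ∈ B, ∀ g₁ g₂ : ℝ,
      g₁ * wAvg f u₁ A + (1 - g₁) * wAvg f u₁ C = u₁ x →
      g₂ * wAvg f u₂ A + (1 - g₂) * wAvg f u₂ C = u₂ x → g₂ < g₁) :
    (∃! γ : ℝ, γ ∈ Ioo (0:ℝ) 1 ∧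
      γ * wAvg f u₁ A + (1 - γ) * wAvg f u₁ C = wAvg f u₁ B) ∧
    (∃! γ : ℝ, γ ∈ Ioo (0:ℝ) 1 ∧
      γ * wAvg f u₂ A + (1 - γ) * wAvg f u₂ C = wAvg f u₂ B) ∧
    (∀ γ₁ γ₂ : ℝ, γ₁ ∈ Ioo (0:ℝ) 1 → γ₂ ∈ Ioo (0:ℝ) 1 →
      γ₁ * wAvg f u₁ A + (1 - γ₁) * wAvg f u₁ C = wAvg f u₁ B →
      γ₂ * wAvg f u₂ A + (1 - γ₂) * wAvg f u₂ C = wAvg f u₂ B →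
      γ₂ < γ₁) := by
  have hfI : IntegrableOn f (Icc 0 Xb) := hf.integrableOn_Icc
  have hintB : ∀ g : ℝ → ℝ, ContinuousOn g (Icc 0 Xb) → IntegrableOn (fun x => g x * f x) B :=
    fun g hg => (hg.mul hf).integrableOn_Icc.mono_set hBsub
  have hmono : ∀ u, ContinuousOn u (Icc 0 Xb) → StrictAntiOn u (Icc 0 Xb) →
      wAvg f u C < wAvg f u B ∧ wAvg f u B < wAvg f u A := fun u hu hua =>
    ⟨hua.wAvg_lt_wAvg_of_lt ordConnected_Icc hBsub hCsub hB hC hfpos hfI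
      (hu.mul hf).integrableOn_Icc hBC hBmass hCmass,
    hua.wAvg_lt_wAvg_of_lt ordConnected_Icc hAsub hBsub hA hB hfpos hfI
      (hu.mul hf).integrableOn_Icc hAB hAmass hBmass⟩
  obtain ⟨hBC₁, hAB₁⟩ := hmono u₁ hu₁c hu₁a
  obtain ⟨hBC₂, hAB₂⟩ := hmono u₂ hu₂c hu₂a
  refine ⟨existsUnique_mix_eq hBC₁ hAB₁, existsUnique_mix_eq hBC₂ hAB₂, ?_⟩
  rintro γ₁ γ₂ - - h₁ h₂
  have hAC₁ : wAvg f u₁ A ≠ wAvg f u₁ C := (hBC₁.trans hAB₁).ne'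
  have hAC₂ : wAvg f u₂ A ≠ wAvg f u₂ C := (hBC₂.trans hAB₂).ne'
  rw [eq_mixWeight hAC₁ h₁, eq_mixWeight hAC₂ h₂,
    ← wAvg_mixWeight _ _ hBmass.ne' (hfI.mono_set hBsub) (hintB u₁ hu₁c),
    ← wAvg_mixWeight _ _ hBmass.ne' (hfI.mono_set hBsub) (hintB u₂ hu₂c)]
  exact wAvg_lt_wAvg hB (fun x hx => hfpos x (hBsub hx)) hBmass
    (hintB _ ((hu₂c.sub continuousOn_const).div_const _))
    (hintB _ ((hu₁c.sub continuousOn_const).div_const _))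
    fun x hx => hcmp x hx _ _ (mixWeight_mix hAC₁ _) (mixWeight_mix hAC₂ _)

/-- Claim F1: for ordered sets `A ◁ B ◁ C` of positive supply mass,
there is a unique mixing weight `γ ∈ (0,1)` making an agent indifferent between
`γ·(f|A) + (1−γ)·(f|C)` and `f|B`; and a less risk-averse agent (pointwise smaller
two-point indifference weights) has a strictly smaller weight: `γ₂ < γ₁`. -/
theorem stmt13 (Xb : ℝ) (hXb : 0 < Xb)
    (f : ℝ → ℝ) (hf : ContinuousOn f (Icc 0 Xb)) (hfpos : ∀ x ∈ Icc (0:ℝ) Xb, 0 < f x)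
    (A B C : Set ℝ) (hA : MeasurableSet A) (hB : MeasurableSet B) (hC : MeasurableSet C)
    (hAsub : A ⊆ Icc 0 Xb) (hBsub : B ⊆ Icc 0 Xb) (hCsub : C ⊆ Icc 0 Xb)
    (hAne : A.Nonempty) (hBne : B.Nonempty) (hCne : C.Nonempty)
    (hAB : ∀ a ∈ A, ∀ b ∈ B, a < b) (hBC : ∀ b ∈ B, ∀ c ∈ C, b < c)
    (hAmass : 0 < ∫ x in A, f x) (hBmass : 0 < ∫ x in B, f x) (hCmass : 0 < ∫ x in C, f x)
    (u₁ u₂ : ℝ → ℝ)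
    (hu₁c : ContinuousOn u₁ (Icc 0 Xb)) (hu₂c : ContinuousOn u₂ (Icc 0 Xb))
    (hu₁a : StrictAntiOn u₁ (Icc 0 Xb)) (hu₂a : StrictAntiOn u₂ (Icc 0 Xb))
    (hcmp : ∀ x ∈ B, ∀ g₁ g₂ : ℝ,
      g₁ * wAvg f u₁ A + (1 - g₁) * wAvg f u₁ C = u₁ x →
      g₂ * wAvg f u₂ A + (1 - g₂) * wAvg f u₂ C = u₂ x → g₂ < g₁) :
    (∃! γ : ℝ, γ ∈ Ioo (0:ℝ) 1 ∧
      γ * wAvg f u₁ A + (1 - γ) * wAvg f u₁ C = wAvg f u₁ B) ∧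
    (∃! γ : ℝ, γ ∈ Ioo (0:ℝ) 1 ∧
      γ * wAvg f u₂ A + (1 - γ) * wAvg f u₂ C = wAvg f u₂ B) ∧
    (∀ γ₁ γ₂ : ℝ, γ₁ ∈ Ioo (0:ℝ) 1 → γ₂ ∈ Ioo (0:ℝ) 1 →
      γ₁ * wAvg f u₁ A + (1 - γ₁) * wAvg f u₁ C = wAvg f u₁ B →
      γ₂ * wAvg f u₂ A + (1 - γ₂) * wAvg f u₂ C = wAvg f u₂ B →
      γ₂ < γ₁) :=
  stmt13_general Xb f hf hfpos A B C hA hB hC hAsub hBsub hCsub hAB hBC hAmass hBmass hCmass u₁ u₂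
    hu₁c hu₂c hu₁a hu₂a hcmp
end

section
/- Let u : [0,∞) → (0,∞) be continuous, strictly decreasing with lim_{x→∞} u(x) = 0, extended by u(⋄) = 0. For measurable B ⊂ (x₂, X] with q_I(B) > 0 and A ⊂ [x₂, X] with A ◁ B and remaining supply (f − μ_I q_I)(A) > 0, there exists γ̄ ∈ (0,1) such that the P-agent is indifferent between the lottery γ̄·((f − μ_I q_I)|A) + (1−γ̄)·δ_⋄ and the lottery q_I | B; moreover an I-agent (strictly less risk averse) strictly prefers the former lottery: V_I(γ̄·((f − μ_I q_I)|A) + (1−γ̄)·δ_⋄) > V_I(q_I | B). -/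
open Set MeasureTheory Filter

/-!
Let `c = sup A`, so that `A` lies below `c` and `B` above it. Since `u_P` is strictly
decreasing and `{c}` is null, the `P`-value of `(f - μ_I q_I)|A` is strictly larger than
`u_P c`, while that of `q_I|B` is at most `u_P c`; this gives `γ̄ ∈ (0,1)`.
For the `I`-agent, strict risk-aversion comparison says exactly that `u_I / u_P` is strictly
decreasing; the same comparison with the weights `u_P (f - μ_I q_I)` on `A` and `u_P q_I`
on `B` yields the strict preference.
-/

section WeightedAverage

variable {α : Type*} [MeasurableSpace α] {μ : Measure α} {g v : α → ℝ} {a : ℝ}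

theorem mul_integral_lt_integral_mul (hv0 : 0 ≤ᵐ[μ] v) (hv : Integrable v μ)
    (hgv : Integrable (fun x => g x * v x) μ) (hga : ∀ᵐ x ∂μ, a < g x)
    (hpos : 0 < ∫ x, v x ∂μ) : a * ∫ x, v x ∂μ < ∫ x, g x * v x ∂μ := by
  have hsub : ∫ x, (g x - a) * v x ∂μ = ∫ x, g x * v x ∂μ - a * ∫ x, v x ∂μ := by
    simp only [sub_mul]
    rw [integral_sub hgv (hv.const_mul a), integral_const_mul]
  have hsupp : 0 < μ (Function.support v) :=
    (integral_pos_iff_support_of_nonneg_ae hv0 hv).1 hpos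
  have hdiff : 0 < ∫ x, (g x - a) * v x ∂μ := by
    refine (integral_pos_iff_support_of_nonneg_ae ?_ ?_).2 (hsupp.trans_le (measure_mono_ae ?_))
    · filter_upwards [hv0, hga] with x hv0x hgax using mul_nonneg (sub_nonneg.2 hgax.le) hv0x
    · simp only [sub_mul]
      exact hgv.sub (hv.const_mul a)
    · filter_upwards [hga] with x hgax hvx using mul_ne_zero (sub_ne_zero.2 hgax.ne') hvx
  linarith

theorem integral_mul_le_mul_integral (hv0 : 0 ≤ᵐ[μ] v) (hv : Integrable v μ)
    (hgv : Integrable (fun x => g x * v x) μ) (hga : ∀ᵐ x ∂μ, g x ≤ a) :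
    ∫ x, g x * v x ∂μ ≤ a * ∫ x, v x ∂μ := by
  rw [← integral_const_mul]
  refine integral_mono_ae hgv (hv.const_mul a) ?_
  filter_upwards [hv0, hga] with x hv0x hgax using mul_le_mul_of_nonneg_right hgax hv0x

theorem integral_div_mul_mul_cancel {u p w : α → ℝ} (hp : ∀ᵐ x ∂μ, p x ≠ 0) :
    ∫ x, u x / p x * (p x * w x) ∂μ = ∫ x, u x * w x ∂μ := by
  refine integral_congr_ae ?_
  filter_upwards [hp] with x hpx
  field_simp

end WeightedAverage

theorem exists_mem_Icc_forall_le_forall_ge {A B : Set ℝ} {a b : ℝ} (hA : A.Nonempty)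
    (hAK : A ⊆ Icc a b) (hAB : ∀ x ∈ A, ∀ y ∈ B, x < y) :
    ∃ c ∈ Icc a b, (∀ x ∈ A, x ≤ c) ∧ ∀ y ∈ B, c ≤ y := by
  obtain ⟨x₀, hx₀⟩ := hA
  have hAc : ∀ x ∈ A, x ≤ sSup A := fun x hx => le_csSup ⟨b, fun x hx => (hAK hx).2⟩ hx
  have hcb : sSup A ≤ b := csSup_le ⟨x₀, hx₀⟩ fun x hx => (hAK hx).2
  exact ⟨sSup A, ⟨(hAK hx₀).1.trans (hAc x₀ hx₀), hcb⟩, hAc,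
    fun y hy => csSup_le ⟨x₀, hx₀⟩ fun x hx => (hAB x hx y hy).le⟩

section StrictAnti

variable {g v w : ℝ → ℝ} {K A B : Set ℝ} {c : ℝ}

theorem mul_setIntegral_lt_setIntegral_mul_of_le (hK : IsCompact K) (hg : StrictAntiOn g K)
    (hgK : ContinuousOn g K) (hc : c ∈ K) (hA : MeasurableSet A) (hAK : A ⊆ K)
    (hAc : ∀ x ∈ A, x ≤ c) (hv0 : ∀ x ∈ A, 0 ≤ v x) (hv : IntegrableOn v A)
    (hpos : 0 < ∫ x in A, v x) : g c * ∫ x in A, v x < ∫ x in A, g x * v x := by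
  refine mul_integral_lt_integral_mul (ae_restrict_of_forall_mem hA hv0) hv
    (hv.continuousOn_mul_of_subset hgK hK hA hAK) ?_ hpos
  filter_upwards [ae_restrict_mem hA, ae_restrict_of_ae (volume.ae_ne c)] with x hxA hxc
  exact hg (hAK hxA) hc ((hAc x hxA).lt_of_ne hxc)

theorem setIntegral_mul_le_mul_setIntegral_of_ge (hK : IsCompact K) (hg : AntitoneOn g K)
    (hgK : ContinuousOn g K) (hc : c ∈ K) (hB : MeasurableSet B) (hBK : B ⊆ K)
    (hcB : ∀ x ∈ B, c ≤ x) (hw0 : ∀ x ∈ B, 0 ≤ w x) (hw : IntegrableOn w B) :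
    ∫ x in B, g x * w x ≤ g c * ∫ x in B, w x :=
  integral_mul_le_mul_integral (ae_restrict_of_forall_mem hB hw0) hw
    (hw.continuousOn_mul_of_subset hgK hK hB hBK)
    (ae_restrict_of_forall_mem hB fun x hx => hg hc (hBK hx) (hcB x hx))

theorem mul_setIntegral_lt_and_setIntegral_mul_le (hK : IsCompact K) (hg : StrictAntiOn g K)
    (hgK : ContinuousOn g K) (hc : c ∈ K) (hA : MeasurableSet A) (hB : MeasurableSet B)
    (hAK : A ⊆ K) (hBK : B ⊆ K) (hAc : ∀ x ∈ A, x ≤ c) (hcB : ∀ x ∈ B, c ≤ x)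
    (hv0 : ∀ x ∈ A, 0 ≤ v x) (hw0 : ∀ x ∈ B, 0 ≤ w x) (hv : IntegrableOn v A)
    (hw : IntegrableOn w B) (hpos : 0 < ∫ x in A, v x) :
    g c * ∫ x in A, v x < ∫ x in A, g x * v x ∧
      ∫ x in B, g x * w x ≤ g c * ∫ x in B, w x :=
  ⟨mul_setIntegral_lt_setIntegral_mul_of_le hK hg hgK hc hA hAK hAc hv0 hv hpos,
    setIntegral_mul_le_mul_setIntegral_of_ge hK hg.antitoneOn hgK hc hB hBK hcB hw0 hw⟩

end StrictAnti

theorem strictAntiOn_div_of_less_risk_averse {uP uI : ℝ → ℝ}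
    (hPanti : StrictAntiOn uP (Ici 0)) (hPpos : ∀ x : ℝ, 0 ≤ x → 0 < uP x)
    (hrisk : ∀ a x : ℝ, 0 ≤ a → a < x → ∀ γ : ℝ, 0 < γ → γ < 1 →
      γ * uP a = uP x → uI x < γ * uI a) :
    StrictAntiOn (fun x => uI x / uP x) (Ici 0) := by
  intro a ha x hx hax
  have hPa := hPpos a ha
  have hPx := hPpos x (le_trans ha hax.le)
  have h := hrisk a x ha hax (uP x / uP a) (div_pos hPx hPa)
    ((div_lt_one hPa).2 (hPanti ha hx hax)) (div_mul_cancel₀ _ hPa.ne')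
  rw [div_mul_eq_mul_div, lt_div_iff₀ hPa] at h
  rw [div_lt_div_iff₀ hPx hPa]
  linarith

theorem exists_mem_Ioo_mul_div_eq_and_lt {WA WB PA PB IA IB p r : ℝ}
    (hWA : 0 < WA) (hWB : 0 < WB) (hp : 0 < p) (hPB : 0 < PB)
    (hPA : p * WA < PA) (hPB' : PB ≤ p * WB) (hIA : r * PA < IA) (hIB : IB ≤ r * PB) :
    ∃ γ ∈ Ioo (0:ℝ) 1, γ * (PA / WA) = PB / WB ∧ IB / WB < γ * (IA / WA) := by
  have hPA₀ : 0 < PA := (mul_pos hp hWA).trans hPA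
  have hmPA : 0 < PA / WA := div_pos hPA₀ hWA
  refine ⟨(PB / WB) / (PA / WA), ⟨by positivity, ?_⟩, div_mul_cancel₀ _ hmPA.ne', ?_⟩
  · rw [div_lt_one hmPA]
    calc PB / WB ≤ p := (div_le_iff₀ hWB).2 hPB'
      _ < PA / WA := (lt_div_iff₀ hWA).2 hPA
  · have key : IB * PA < PB * IA :=
      calc IB * PA ≤ r * PB * PA := mul_le_mul_of_nonneg_right hIB hPA₀.le
        _ = PB * (r * PA) := by ring
        _ < PB * IA := mul_lt_mul_of_pos_left hIA hPB
    have hγ : (PB / WB) / (PA / WA) * (IA / WA) = (PB * IA) / (WB * PA) := by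
      field_simp
    rw [hγ, div_lt_div_iff₀ hWB (mul_pos hWB hPA₀)]
    linarith [mul_lt_mul_of_pos_right key hWB]

theorem stmt18_general (X x₂ : ℝ) (hx₂ : 0 ≤ x₂)
    (uP uI : ℝ → ℝ)
    (hPc : ContinuousOn uP (Ici 0)) (hIc : ContinuousOn uI (Ici 0))
    (hPanti : StrictAntiOn uP (Ici 0))
    (hPpos : ∀ x : ℝ, 0 ≤ x → 0 < uP x)
    (hrisk : ∀ a x : ℝ, 0 ≤ a → a < x → ∀ γ : ℝ, 0 < γ → γ < 1 →
      γ * uP a = uP x → uI x < γ * uI a)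
    (f qI : ℝ → ℝ)
    (μI : ℝ)
    (hqI0 : ∀ x, 0 ≤ qI x)
    (hrem : ∀ x ∈ Icc x₂ X, 0 ≤ f x - μI * qI x)
    (A B : Set ℝ) (hA : MeasurableSet A) (hB : MeasurableSet B)
    (hAsub : A ⊆ Icc x₂ X) (hBsub : B ⊆ Ioc x₂ X)
    (hAB : ∀ a ∈ A, ∀ b ∈ B, a < b)
    (hApos : 0 < ∫ x in A, (f x - μI * qI x))
    (hBpos : 0 < ∫ x in B, qI x) :
    ∃ γ ∈ Ioo (0:ℝ) 1,
      γ * ((∫ x in A, uP x * (f x - μI * qI x)) / (∫ x in A, (f x - μI * qI x)))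
          = (∫ x in B, uP x * qI x) / (∫ x in B, qI x) ∧
      (∫ x in B, uI x * qI x) / (∫ x in B, qI x)
          < γ * ((∫ x in A, uI x * (f x - μI * qI x)) / (∫ x in A, (f x - μI * qI x))) := by
  have hBK : B ⊆ Icc x₂ X := hBsub.trans Ioc_subset_Icc_self
  have hK0 : Icc x₂ X ⊆ Ici 0 := fun x hx => hx₂.trans hx.1
  have hPposA : ∀ x ∈ A, 0 < uP x := fun x hx => hPpos x (hK0 (hAsub hx))
  have hPposB : ∀ x ∈ B, 0 < uP x := fun x hx => hPpos x (hK0 (hBK hx))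
  obtain ⟨c, hc, hAc, hcB⟩ := exists_mem_Icc_forall_le_forall_ge
    (nonempty_iff_ne_empty.2 (by rintro rfl; simp at hApos)) hAsub hAB
  have hwA : IntegrableOn (fun x => f x - μI * qI x) A := Integrable.of_integral_ne_zero hApos.ne'
  have hqB : IntegrableOn qI B := Integrable.of_integral_ne_zero hBpos.ne'
  have hw0 : ∀ x ∈ A, 0 ≤ f x - μI * qI x := fun x hx => hrem x (hAsub hx)
  have hPK := hPc.mono hK0
  have hPqB := hqB.continuousOn_mul_of_subset hPK isCompact_Icc hB hBK
  obtain ⟨hPA, hPB⟩ := mul_setIntegral_lt_and_setIntegral_mul_le isCompact_Icc (hPanti.mono hK0)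
    hPK hc hA hB hAsub hBK hAc hcB hw0 (fun x _ => hqI0 x) hwA hqB hApos
  have hPB₀ : 0 < ∫ x in B, uP x * qI x := by
    simpa using mul_integral_lt_integral_mul (a := 0)
      (ae_restrict_of_forall_mem hB fun x _ => hqI0 x) hqB hPqB
      (ae_restrict_of_forall_mem hB hPposB) hBpos
  obtain ⟨hIA, hIB⟩ := mul_setIntegral_lt_and_setIntegral_mul_le isCompact_Icc
    ((strictAntiOn_div_of_less_risk_averse hPanti hPpos hrisk).mono hK0)
    ((hIc.mono hK0).div hPK fun x hx => (hPpos x (hK0 hx)).ne') hc hA hB hAsub hBK hAc hcB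
    (fun x hx => mul_nonneg (hPposA x hx).le (hw0 x hx))
    (fun x hx => mul_nonneg (hPposB x hx).le (hqI0 x))
    (hwA.continuousOn_mul_of_subset hPK isCompact_Icc hA hAsub) hPqB
    ((mul_pos (hPpos c (hK0 hc)) hApos).trans hPA)
  rw [integral_div_mul_mul_cancel (ae_restrict_of_forall_mem hA fun x hx => (hPposA x hx).ne')]
    at hIA
  rw [integral_div_mul_mul_cancel (ae_restrict_of_forall_mem hB fun x hx => (hPposB x hx).ne')]
    at hIB
  exact exists_mem_Ioo_mul_div_eq_and_lt hApos hBpos (hPpos c (hK0 hc)) hPB₀ hPA hPB hIA hIB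

/-- a step in Lemma 4: with remaining supply `f − μ_I q_I` on `A` and
`q_I`-mass on `B`, where `A ◁ B` within `[x₂, X]`, there is `γ̄ ∈ (0,1)` such that the
`P`-agent is indifferent between the lottery `γ̄·((f − μ_I q_I)|A) + (1−γ̄)·δ_⋄` and the
lottery `q_I | B`, while the strictly less risk-averse `I`-agent strictly prefers the
former. Lottery values are the weighted averages of utilities, with `u(⋄) = 0`. -/
theorem stmt18 (X x₂ : ℝ) (hx₂ : 0 ≤ x₂) (hX : x₂ < X)
    (uP uI : ℝ → ℝ)
    (hPc : ContinuousOn uP (Ici 0)) (hIc : ContinuousOn uI (Ici 0))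
    (hPanti : StrictAntiOn uP (Ici 0)) (hIanti : StrictAntiOn uI (Ici 0))
    (hPpos : ∀ x : ℝ, 0 ≤ x → 0 < uP x) (hIpos : ∀ x : ℝ, 0 ≤ x → 0 < uI x)
    (hPlim : Tendsto uP atTop (nhds 0)) (hIlim : Tendsto uI atTop (nhds 0))
    (hrisk : ∀ a x : ℝ, 0 ≤ a → a < x → ∀ γ : ℝ, 0 < γ → γ < 1 →
      γ * uP a = uP x → uI x < γ * uI a)
    (f qI : ℝ → ℝ) (hfmeas : Measurable f) (hqImeas : Measurable qI)
    (μI : ℝ) (hμI : 0 < μI)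
    (hqI0 : ∀ x, 0 ≤ qI x)
    (hrem : ∀ x ∈ Icc x₂ X, 0 ≤ f x - μI * qI x)
    (A B : Set ℝ) (hA : MeasurableSet A) (hB : MeasurableSet B)
    (hAsub : A ⊆ Icc x₂ X) (hBsub : B ⊆ Ioc x₂ X)
    (hAB : ∀ a ∈ A, ∀ b ∈ B, a < b)
    (hApos : 0 < ∫ x in A, (f x - μI * qI x))
    (hBpos : 0 < ∫ x in B, qI x) :
    ∃ γ ∈ Ioo (0:ℝ) 1,
      γ * ((∫ x in A, uP x * (f x - μI * qI x)) / (∫ x in A, (f x - μI * qI x)))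
          = (∫ x in B, uP x * qI x) / (∫ x in B, qI x) ∧
      (∫ x in B, uI x * qI x) / (∫ x in B, qI x)
          < γ * ((∫ x in A, uI x * (f x - μI * qI x)) / (∫ x in A, (f x - μI * qI x))) :=
  stmt18_general X x₂ hx₂ uP uI hPc hIc hPanti hPpos hrisk f qI μI hqI0 hrem A B hA hB hAsub hBsub
    hAB hApos hBpos
end

section
/- Let u_1, ..., u_N : [0,X] → ℝ be measurable functions that are 'linearly independent over sets of positive measure': for any λ_0, λ_1, ..., λ_N ∈ ℝ not all zero among λ_1,...,λ_N, the set {x ∈ [0,X] : Σ_{j=1}^N λ_j u_j(x) = λ_0} has Lebesgue measure zero. Let A ⊆ [0,X] have positive Lebesgue measure and partition A into N+1 disjoint subsets A_1,...,A_{N+1} of positive measure. Then one can choose measurable B_i ⊆ A_i, i = 1,...,N+1, such that the N+1 vectors ζ^0 = (ν(B_1),...,ν(B_{N+1})) and ζ^l = (∫_{B_1} u_l dx, ..., ∫_{B_{N+1}} u_l dx) for l = 1,...,N contain some N+1 of them linearly independent — in particular, for any distinguished index k ∈ {1,...,N}, there is a unit vector e ∈ ℝ^{N+1} with ζ^k ·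 e > 0 and ζ^i · e = 0 for all i ∈ {0,...,N} \ {k}. -/
/-!
Choose the sets `B_i` one at a time. With `ζ(B) = (ν(B), ∫_B u_1, …, ∫_B u_N)`, suppose
`ζ(B_1), …, ζ(B_m)` are linearly independent and `m ≤ N`. Their span is a proper subspace,
annihilated by some `λ ≠ 0`. If `ζ(B) ∈ span` for every measurable `B ⊆ A_{m+1}`, then
`∫_B (λ_0 + Σ λ_l u_l) = 0` for all such `B`, hence `λ_0 + Σ λ_l u_l = 0` a.e. on `A_{m+1}`
(restricted to a part of positive measure on which the `u_l` are bounded, so that everything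
is integrable), contradicting the null-level-set hypothesis. The matrix with columns
`ζ(B_i)` is then invertible, and `e` is the normalized `k`-th column of its inverse.
-/

open Set MeasureTheory Matrix

theorem exists_measure_inter_forall_abs_le_pos {α ι : Type*} [MeasurableSpace α] [Fintype ι]
    {μ : Measure α} {u : ι → α → ℝ} {S : Set α} (hS : 0 < μ S) :
    ∃ n : ℕ, 0 < μ (S ∩ {x | ∀ l, |u l x| ≤ n}) := by
  refine exists_measure_pos_of_not_measure_iUnion_null (measure_mono_null ?_ |>.mt hS.ne')
  intro x hx
  obtain ⟨n, hn⟩ := exists_nat_ge (∑ l, |u l x|)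
  exact mem_iUnion.mpr ⟨n, hx, fun l =>
    (Finset.single_le_sum (fun j _ => abs_nonneg (u j x)) (Finset.mem_univ l)).trans hn⟩

theorem exists_ne_zero_forall_dotProduct_eq_zero {ι : Type*} [Fintype ι] [DecidableEq ι]
    {W : Submodule ℝ (ι → ℝ)} (hW : W ≠ ⊤) :
    ∃ lam : ι → ℝ, lam ≠ 0 ∧ ∀ w ∈ W, lam ⬝ᵥ w = 0 := by
  obtain ⟨φ, hφ, hφW⟩ := Submodule.exists_dual_map_eq_bot_of_lt_top hW.lt_top inferInstance
  set lam : ι → ℝ := fun j => φ fun i => if j = i then 1 else 0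
  have hφ_apply (w) : φ w = lam ⬝ᵥ w := by
    simp only [LinearMap.pi_apply_eq_sum_univ φ w, dotProduct, smul_eq_mul, mul_comm, lam]
  refine ⟨lam, fun h => hφ (LinearMap.ext fun w => ?_), fun w hw => ?_⟩
  · rw [hφ_apply, h, zero_dotProduct, LinearMap.zero_apply]
  · rw [← hφ_apply, ← Submodule.mem_bot ℝ, ← hφW]
    exact Submodule.mem_map_of_mem hw

theorem exists_linearIndependent_mem_of_not_subset {K V : Type*} [DivisionRing K]
    [AddCommGroup V] [Module K V] [FiniteDimensional K V] :
    ∀ {m : ℕ} (T : Fin m → Set V), m ≤ Module.finrank K V →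
      (∀ i (W : Submodule K V), W ≠ ⊤ → ¬ T i ⊆ W) →
      ∃ v : Fin m → V, (∀ i, v i ∈ T i) ∧ LinearIndependent K v
  | 0, _, _, _ => ⟨Fin.elim0, fun i => i.elim0, linearIndependent_empty_type⟩
  | m + 1, T, hm, hT => by
    obtain ⟨v, hvT, hv⟩ :=
      exists_linearIndependent_mem_of_not_subset (T ∘ Fin.castSucc) (by omega) fun i => hT _
    have hspan : Submodule.span K (range v) ≠ ⊤ := by
      intro htop
      have := (finrank_le_of_span_eq_top htop).trans (Fintype.card_fin m).le
      omega
    obtain ⟨w, hwT, hw⟩ := Set.not_subset.mp (hT (Fin.last m) _ hspan)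
    refine ⟨Fin.snoc v w, Fin.lastCases ?_ fun i => ?_, linearIndependent_finSnoc.mpr ⟨hv, hw⟩⟩
    · simpa using hwT
    · simpa using hvT i

theorem Matrix.exists_sum_sq_eq_one_mulVec_eq_single {n : Type*} [Fintype n] [DecidableEq n]
    {M : Matrix n n ℝ} (hM : IsUnit M) (k : n) :
    ∃ e : n → ℝ, ∑ i, e i ^ 2 = 1 ∧ ∃ c > 0, M *ᵥ e = Pi.single k c := by
  set e₀ := M⁻¹ *ᵥ Pi.single k 1
  have hMe₀ : M *ᵥ e₀ = Pi.single k 1 := by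
    rw [mulVec_mulVec, mul_nonsing_inv M ((isUnit_iff_isUnit_det M).mp hM), one_mulVec]
  have he₀ : e₀ ≠ 0 := fun h => by simpa [h] using congrFun hMe₀ k
  have hs : 0 < ∑ i, e₀ i ^ 2 := by
    obtain ⟨i, hi⟩ := Function.ne_iff.mp he₀
    exact Finset.sum_pos' (fun j _ => sq_nonneg _) ⟨i, Finset.mem_univ _, sq_pos_of_ne_zero hi⟩
  set r := √(∑ i, e₀ i ^ 2)
  have hr : 0 < r := Real.sqrt_pos.mpr hs
  refine ⟨r⁻¹ • e₀, ?_, r⁻¹, inv_pos.mpr hr, ?_⟩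
  · calc ∑ i, (r⁻¹ • e₀) i ^ 2 = (r ^ 2)⁻¹ * ∑ i, e₀ i ^ 2 := by
          simp only [Pi.smul_apply, smul_eq_mul, mul_pow, inv_pow, Finset.mul_sum]
      _ = 1 := by rw [Real.sq_sqrt hs.le, inv_mul_cancel₀ hs.ne']
  · ext j
    simp [mulVec_smul, hMe₀, Pi.single_apply]

variable {N : ℕ}

noncomputable def momentVector (u : Fin N → ℝ → ℝ) (B : Set ℝ) : Fin (N + 1) → ℝ :=
  Fin.cons (volume B).toReal fun l => ∫ x in B, u l x

theorem setIntegral_add_dotProduct {u : Fin N → ℝ → ℝ} {B : Set ℝ} (hB : volume B ≠ ⊤)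
    (hu : ∀ l, IntegrableOn (u l) B) (c : ℝ) (a : Fin N → ℝ) :
    ∫ x in B, c + a ⬝ᵥ (fun l => u l x) = Fin.cons c a ⬝ᵥ momentVector u B := by
  have hsum : Integrable (fun x => a ⬝ᵥ fun l => u l x) (volume.restrict B) :=
    integrable_finsetSum _ fun l _ => (hu l).const_mul (a l)
  rw [integral_add (integrableOn_const (C := c) hB) hsum, setIntegral_const]
  simp only [dotProduct]
  rw [integral_finsetSum _ fun l _ => (hu l).const_mul (a l)]
  simp only [momentVector, Fin.sum_univ_succ, Fin.cons_zero, Fin.cons_succ, integral_const_mul,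
    smul_eq_mul, measureReal_def]
  ring

def HasNullLevelSets (X : ℝ) (u : Fin N → ℝ → ℝ) : Prop :=
  ∀ (lam0 : ℝ) (lam : Fin N → ℝ), lam ≠ 0 →
    volume {x ∈ Icc (0:ℝ) X | ∑ j, lam j * u j x = lam0} = 0

namespace HasNullLevelSets

variable {X : ℝ} {u : Fin N → ℝ → ℝ}

theorem volume_add_dotProduct_eq_zero (h : HasNullLevelSets X u) {c : ℝ} {a : Fin N → ℝ}
    (hca : (Fin.cons c a : Fin (N + 1) → ℝ) ≠ 0) :
    volume {x ∈ Icc 0 X | c + a ⬝ᵥ (fun l => u l x) = 0} = 0 := by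
  rcases eq_or_ne a 0 with rfl | ha
  · have hc : c ≠ 0 := by rintro rfl; exact hca cons_zero_zero
    simp [hc]
  · refine measure_mono_null ?_ (h (-c) a ha)
    rintro x ⟨hxX, hx⟩
    refine ⟨hxX, ?_⟩
    change a ⬝ᵥ _ = -c
    linarith

theorem not_image_momentVector_subset (h : HasNullLevelSets X u) (hu : ∀ l, Measurable (u l))
    {S : Set ℝ} (hS : MeasurableSet S) (hSX : S ⊆ Icc 0 X) (hSpos : 0 < volume S)
    {W : Submodule ℝ (Fin (N + 1) → ℝ)} (hW : W ≠ ⊤) :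
    ¬ momentVector u '' {B | MeasurableSet B ∧ B ⊆ S} ⊆ W := by
  obtain ⟨n, hn⟩ := exists_measure_inter_forall_abs_le_pos (u := u) hSpos
  set S' := S ∩ {x | ∀ l, |u l x| ≤ n}
  have hS'meas : MeasurableSet S' := hS.inter <| ofPred_forall _ ▸
    MeasurableSet.iInter fun l => measurableSet_le (hu l).abs measurable_const
  have hS'fin : volume S' ≠ ⊤ :=
    measure_ne_top_of_subset (inter_subset_left.trans hSX) measure_Icc_lt_top.ne
  have hint (l) : IntegrableOn (u l) S' := Measure.integrableOn_of_bounded hS'fin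
    (hu l).aestronglyMeasurable (ae_restrict_of_forall_mem hS'meas fun x hx => hx.2 l)
  obtain ⟨lam, hlam, hlamW⟩ := exists_ne_zero_forall_dotProduct_eq_zero hW
  obtain ⟨c, a, rfl⟩ : ∃ c a, Fin.cons c a = lam := ⟨lam 0, Fin.tail lam, Fin.cons_self_tail lam⟩
  intro hsub
  set f : ℝ → ℝ := fun x => c + a ⬝ᵥ fun l => u l x
  have hf : ∀ᵐ x ∂volume.restrict S', f x = 0 := by
    refine Integrable.ae_eq_zero_of_forall_setIntegral_eq_zero ?_ fun B hB _ => ?_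
    · exact (integrableOn_const hS'fin).add
        (integrable_finsetSum _ fun l _ => (hint l).const_mul (a l))
    · rw [Measure.restrict_restrict hB, setIntegral_add_dotProduct
        (measure_ne_top_of_subset inter_subset_right hS'fin)
        (fun l => (hint l).mono_set inter_subset_right)]
      exact hlamW _ <| hsub
        ⟨B ∩ S', ⟨hB.inter hS'meas, inter_subset_right.trans inter_subset_left⟩, rfl⟩
  refine hn.ne' (measure_mono_null (fun x hx => ?_)
    (measure_union_null ((ae_restrict_iff' hS'meas).mp hf) (h.volume_add_dotProduct_eq_zero hlam)))
  by_cases hfx : f x = 0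
  · exact Or.inr ⟨hSX hx.1, hfx⟩
  · exact Or.inl fun h => hfx (h hx)

end HasNullLevelSets

theorem stmt19_general (X : ℝ) (N : ℕ)
    (u : Fin N → ℝ → ℝ) (humeas : ∀ l, Measurable (u l))
    (hindep : ∀ (lam0 : ℝ) (lam : Fin N → ℝ), lam ≠ 0 →
      volume {x ∈ Icc (0:ℝ) X | ∑ j, lam j * u j x = lam0} = 0)
    (A : Set ℝ) (hAsub : A ⊆ Icc 0 X)
    (Ap : Fin (N + 1) → Set ℝ) (hApmeas : ∀ i, MeasurableSet (Ap i))
    (hAppos : ∀ i, 0 < volume (Ap i))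
    (hApcover : (⋃ i, Ap i) = A) :
    ∃ B : Fin (N + 1) → Set ℝ,
      (∀ i, MeasurableSet (B i) ∧ B i ⊆ Ap i) ∧
      LinearIndependent ℝ
        (Fin.cons (fun i => (volume (B i)).toReal)
          (fun l i => ∫ x in B i, u l x) : Fin (N + 1) → (Fin (N + 1) → ℝ)) ∧
      (∀ k : Fin N, ∃ e : Fin (N + 1) → ℝ,
        (∑ i, e i ^ 2 = 1) ∧
        (0 < ∑ i, (∫ x in B i, u k x) * e i) ∧
        (∑ i, (volume (B i)).toReal * e i = 0) ∧
        (∀ l : Fin N, l ≠ k → ∑ i, (∫ x in B i, u l x) * e i = 0)) := by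
  have hApX (i) : Ap i ⊆ Icc 0 X := (hApcover ▸ subset_iUnion Ap i).trans hAsub
  obtain ⟨v, hvB, hv⟩ := exists_linearIndependent_mem_of_not_subset
    (fun i => momentVector u '' {B | MeasurableSet B ∧ B ⊆ Ap i}) (by simp)
    fun i _ hW => HasNullLevelSets.not_image_momentVector_subset hindep humeas (hApmeas i)
      (hApX i) (hAppos i) hW
  choose B hB hBv using hvB
  set ζ : Matrix (Fin (N + 1)) (Fin (N + 1)) ℝ :=
    Fin.cons (fun i => (volume (B i)).toReal) (fun l i => ∫ x in B i, u l x)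
  have hζ : ζ = (Matrix.of v)ᵀ := by
    ext j i
    rw [transpose_apply, of_apply, ← hBv i]
    exact Fin.cases rfl (fun l => rfl) j
  have hζunit : IsUnit ζ := by
    rw [hζ, isUnit_transpose, ← linearIndependent_rows_iff_isUnit]
    exact hv
  refine ⟨B, hB, linearIndependent_rows_iff_isUnit.mpr hζunit, fun k => ?_⟩
  obtain ⟨e, he, c, hc, hζe⟩ := exists_sum_sq_eq_one_mulVec_eq_single hζunit k.succ
  have hrow (j) : ∑ i, ζ j i * e i = (Pi.single k.succ c : Fin (N + 1) → ℝ) j := congrFun hζe j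
  refine ⟨e, he, ?_, ?_, fun l hl => ?_⟩
  · exact hc.trans_eq (by simpa [ζ] using (hrow k.succ).symm)
  · simpa [ζ] using hrow 0
  · simpa [ζ, hl] using hrow l.succ

/-- Claims C2–C3: if the type utilities `u_1,…,u_N` are linearly
independent over sets of positive measure, then given a partition of a positive-measure
set `A ⊆ [0,X]` into `N+1` positive-measure pieces `A_1,…,A_{N+1}`, one can choose
`B_i ⊆ A_i` so that the `N+1` vectors
`ζ^0 = (ν(B_i))_i` and `ζ^l = (∫_{B_i} u_l)_i`, `l = 1,…,N`, are linearly independent;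
in particular, for each `k` there is a unit vector `e` with `ζ^k · e > 0` and
`ζ^i · e = 0` for all `i ≠ k`. -/
theorem stmt19 (X : ℝ) (hX : 0 < X) (N : ℕ)
    (u : Fin N → ℝ → ℝ) (humeas : ∀ l, Measurable (u l))
    (hindep : ∀ (lam0 : ℝ) (lam : Fin N → ℝ), lam ≠ 0 →
      volume {x ∈ Icc (0:ℝ) X | ∑ j, lam j * u j x = lam0} = 0)
    (A : Set ℝ) (hA : MeasurableSet A) (hAsub : A ⊆ Icc 0 X) (hApos : 0 < volume A)
    (Ap : Fin (N + 1) → Set ℝ) (hApmeas : ∀ i, MeasurableSet (Ap i))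
    (hAppos : ∀ i, 0 < volume (Ap i))
    (hApdisj : Pairwise (Function.onFun Disjoint Ap))
    (hApcover : (⋃ i, Ap i) = A) :
    ∃ B : Fin (N + 1) → Set ℝ,
      (∀ i, MeasurableSet (B i) ∧ B i ⊆ Ap i) ∧
      LinearIndependent ℝ
        (Fin.cons (fun i => (volume (B i)).toReal)
          (fun l i => ∫ x in B i, u l x) : Fin (N + 1) → (Fin (N + 1) → ℝ)) ∧
      (∀ k : Fin N, ∃ e : Fin (N + 1) → ℝ,
        (∑ i, e i ^ 2 = 1) ∧
        (0 < ∑ i, (∫ x in B i, u k x) * e i) ∧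
        (∑ i, (volume (B i)).toReal * e i = 0) ∧
        (∀ l : Fin N, l ≠ k → ∑ i, (∫ x in B i, u l x) * e i = 0)) :=
  stmt19_general X N u humeas hindep A hAsub Ap hApmeas hAppos hApcover
end
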